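/- arXiv:math/0410093 — 9 statements merged into one kernel-verified Lean document; each statement's English description precedes it below -/
import Mathlib

section
/- Let ω > 0 and Q > 0. Suppose (λ_n) is a sequence in (0,1) with log(1/λ_n)/log n → 1 and n λ_n (log n)^{−1/2} → 0 as n → ∞. Then lim_{n→∞} n (log n)^{−1/2} · sup_{θ ∈ H_ω^∞(Q)} R_n(λ_n, θ) = 2√2 / ω, and moreover lim_{n→∞} n (log n)^{−1/2} · inf_{λ > 0} sup_{θ ∈ H_ω^∞(Q)} R_n(λ, θ) = 2√2 / ω. That is, the periodic Gaussian regularization with such λ_n is asymptotically minimax over H_ω^∞(Q). -/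
open Real Filter

/-- The ellipsoid `{θ : ∑ ρ_l θ_l² ≤ Q}` of square sequences. -/
def ellipsoid (ρ : ℕ → ℝ) (Q : ℝ) : Set (ℕ → ℝ) :=
  {θ | Summable (fun l => ρ l * θ l ^ 2) ∧ ∑' l : ℕ, ρ l * θ l ^ 2 ≤ Q}

/-- The risk `R_n(λ, θ)` of the periodic Gaussian regularization estimator
`θ̂_l = (1 + λ β_l)⁻¹ y_l` in the Gaussian sequence model with noise variance `1/n`:
variance term plus squared-bias term. -/
noncomputable def regRisk (β : ℕ → ℝ) (n : ℕ) (lam : ℝ) (θ : ℕ → ℝ) : ℝ :=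
  (1 / n) * ∑' l : ℕ, ((1 + lam * β l) ^ 2)⁻¹ +
    ∑' l : ℕ, (lam * β l / (1 + lam * β l)) ^ 2 * θ l ^ 2

/-!
The maximal risk over the ellipsoid is squeezed between the variance term `V(λ)/n`, attained at
`θ = 0`, and `V(λ)/n + λQ/4`, because `(u/(1+u))² ≤ u/4`. Since `β` takes each value
`exp(k²ω²/2)` twice, `V(exp(-u²))` essentially counts the `k` with `k²ω²/2 ≤ u²`, whence
`V(λ) ∼ 2√(2 log(1/λ))/ω`, and the first limit follows. For the minimax risk fix `s < 1`: a
parameter `λ ≤ n^{-s²}` pays at least the variance `V(n^{-s²})/n ∼ 2√2 s √(log n)/(ωn)`, while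
`λ > n^{-s²}` pays the bias `Q/(4β_m)` of a single coefficient at a frequency with `β_m ≈ n^{s²}`,
which is of larger order.
-/

open Topology

namespace PeriodicGaussian

noncomputable def varianceSum (β : ℕ → ℝ) (lam : ℝ) : ℝ :=
  ∑' l : ℕ, ((1 + lam * β l) ^ 2)⁻¹

noncomputable def maxRisk (β : ℕ → ℝ) (Q : ℝ) (n : ℕ) (lam : ℝ) : ℝ :=
  ⨆ θ ∈ ellipsoid β Q, regRisk β n lam θ

lemma sq_div_one_add_le {u : ℝ} (hu : 0 ≤ u) : (u / (1 + u)) ^ 2 ≤ u / 4 := by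
  rw [div_pow, div_le_div_iff₀ (by positivity) (by norm_num)]
  nlinarith [sq_nonneg (1 - u)]

lemma quarter_le_sq_div_one_add {u : ℝ} (hu : 1 ≤ u) : 1 / 4 ≤ (u / (1 + u)) ^ 2 := by
  rw [div_pow, div_le_div_iff₀ (by norm_num) (by positivity)]
  nlinarith

variable {ω Q lam : ℝ} {β : ℕ → ℝ} {n : ℕ}

lemma varianceSum_nonneg : 0 ≤ varianceSum β lam :=
  tsum_nonneg fun _ => by positivity

lemma regRisk_eq (θ : ℕ → ℝ) :
    regRisk β n lam θ =
      varianceSum β lam / n + ∑' l, (lam * β l / (1 + lam * β l)) ^ 2 * θ l ^ 2 := by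
  rw [regRisk, varianceSum, one_div_mul_eq_div]

lemma zero_mem_ellipsoid (hQ : 0 ≤ Q) : (0 : ℕ → ℝ) ∈ ellipsoid β Q := by
  simpa [ellipsoid] using hQ

lemma regRisk_zero : regRisk β n lam 0 = varianceSum β lam / n := by
  simp [regRisk_eq]

section NonnegWeights

variable (hβ : ∀ l, 0 ≤ β l) (hlam : 0 ≤ lam)
include hβ hlam

lemma bias_le {θ : ℕ → ℝ} (hθ : θ ∈ ellipsoid β Q) :
    ∑' l, (lam * β l / (1 + lam * β l)) ^ 2 * θ l ^ 2 ≤ lam * Q / 4 := by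
  have hle : ∀ l, (lam * β l / (1 + lam * β l)) ^ 2 * θ l ^ 2 ≤ lam / 4 * (β l * θ l ^ 2) :=
    fun l => by
      have := sq_div_one_add_le (mul_nonneg hlam (hβ l))
      nlinarith [sq_nonneg (θ l)]
  have hs := hθ.1.mul_left (lam / 4)
  calc ∑' l, (lam * β l / (1 + lam * β l)) ^ 2 * θ l ^ 2
      ≤ ∑' l, lam / 4 * (β l * θ l ^ 2) :=
        (hs.of_nonneg_of_le (fun _ => by positivity) hle).tsum_le_tsum hle hs
    _ = lam / 4 * ∑' l, β l * θ l ^ 2 := tsum_mul_left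
    _ ≤ lam * Q / 4 := by nlinarith [hθ.2]

lemma regRisk_le {θ : ℕ → ℝ} (hθ : θ ∈ ellipsoid β Q) :
    regRisk β n lam θ ≤ varianceSum β lam / n + lam * Q / 4 := by
  rw [regRisk_eq]
  linarith [bias_le hβ hlam hθ]

lemma maxRisk_le (hQ : 0 ≤ Q) : maxRisk β Q n lam ≤ varianceSum β lam / n + lam * Q / 4 := by
  have : 0 ≤ varianceSum β lam / n + lam * Q / 4 :=
    add_nonneg (div_nonneg varianceSum_nonneg n.cast_nonneg) (by positivity)
  exact Real.iSup_le (fun θ => Real.iSup_le (fun hθ => regRisk_le hβ hlam hθ) this) this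

lemma regRisk_le_maxRisk {θ : ℕ → ℝ} (hθ : θ ∈ ellipsoid β Q) :
    regRisk β n lam θ ≤ maxRisk β Q n lam := by
  refine le_ciSup₂ (f := fun θ (_ : θ ∈ ellipsoid β Q) => regRisk β n lam θ)
    ⟨varianceSum β lam / n + lam * Q / 4, ?_⟩ θ hθ
  intro r hr
  obtain ⟨θ', hθ', rfl⟩ : ∃ θ', ∃ hθ' : θ' ∈ ellipsoid β Q, regRisk β n lam θ' = r := by
    simpa only [Set.mem_iUnion, Set.mem_range] using hr
  exact regRisk_le hβ hlam hθ'

lemma varianceSum_div_le_maxRisk (hQ : 0 ≤ Q) : varianceSum β lam / n ≤ maxRisk β Q n lam :=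
  regRisk_zero (β := β) ▸ regRisk_le_maxRisk hβ hlam (zero_mem_ellipsoid hQ)

lemma maxRisk_nonneg (hQ : 0 ≤ Q) : 0 ≤ maxRisk β Q n lam :=
  (div_nonneg varianceSum_nonneg n.cast_nonneg).trans (varianceSum_div_le_maxRisk hβ hlam hQ)

end NonnegWeights

lemma sInf_maxRisk_le (hβ : ∀ l, 0 ≤ β l) (hQ : 0 ≤ Q) (hlam : 0 < lam) :
    sInf (maxRisk β Q n '' Set.Ioi 0) ≤ maxRisk β Q n lam :=
  csInf_le ⟨0, by rintro _ ⟨t, ht, rfl⟩; exact maxRisk_nonneg hβ (le_of_lt ht) hQ⟩ ⟨lam, hlam, rfl⟩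

lemma single_mem_ellipsoid {m : ℕ} (hm : 0 < β m) (hQ : 0 ≤ Q) :
    Pi.single m (√(Q / β m)) ∈ ellipsoid β Q := by
  have hsum : HasSum (fun l => β l * Pi.single (M := fun _ => ℝ) m (√(Q / β m)) l ^ 2) Q := by
    convert hasSum_single (f := fun l => β l * Pi.single (M := fun _ => ℝ) m (√(Q / β m)) l ^ 2)
      m (fun l hl => by simp [hl]) using 1
    simp [sq_sqrt (div_nonneg hQ hm.le), mul_div_cancel₀ _ hm.ne']
  exact ⟨hsum.summable, hsum.tsum_eq.le⟩

lemma div_four_mul_le_maxRisk (hβ : ∀ l, 0 ≤ β l) (hlam : 0 ≤ lam) (hQ : 0 ≤ Q) {m : ℕ}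
    (hm : 1 ≤ lam * β m) : Q / (4 * β m) ≤ maxRisk β Q n lam := by
  have hβm : 0 < β m := pos_of_mul_pos_right (one_pos.trans_le hm) hlam
  set θ := Pi.single (M := fun _ => ℝ) m (√(Q / β m))
  have hbias : HasSum (fun l => (lam * β l / (1 + lam * β l)) ^ 2 * θ l ^ 2)
      ((lam * β m / (1 + lam * β m)) ^ 2 * (Q / β m)) := by
    convert hasSum_single (f := fun l => (lam * β l / (1 + lam * β l)) ^ 2 * θ l ^ 2)
      m (fun l hl => by simp [θ, hl]) using 1
    simp [θ, sq_sqrt (div_nonneg hQ hβm.le)]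
  calc Q / (4 * β m) = 1 / 4 * (Q / β m) := by ring
    _ ≤ (lam * β m / (1 + lam * β m)) ^ 2 * (Q / β m) := by
        gcongr; exact quarter_le_sq_div_one_add hm
    _ ≤ regRisk β n lam θ := by
        rw [regRisk_eq, hbias.tsum_eq]
        linarith [div_nonneg (varianceSum_nonneg (β := β) (lam := lam)) n.cast_nonneg]
    _ ≤ maxRisk β Q n lam := regRisk_le_maxRisk hβ hlam (single_mem_ellipsoid hβm hQ)

lemma varianceSum_antitoneOn (hβ : ∀ l, 0 ≤ β l)
    (hs : ∀ t, 0 < t → Summable fun l => ((1 + t * β l) ^ 2)⁻¹) :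
    AntitoneOn (varianceSum β) (Set.Ioi 0) := by
  intro t ht t' ht' hle
  refine (hs t' ht').tsum_le_tsum (fun l => ?_) (hs t ht)
  have hpos : 0 ≤ t * β l := mul_nonneg (le_of_lt ht) (hβ l)
  have : t * β l ≤ t' * β l := by gcongr; exact hβ l
  gcongr

lemma min_le_maxRisk (hβ : ∀ l, 0 ≤ β l)
    (hs : ∀ t, 0 < t → Summable fun l => ((1 + t * β l) ^ 2)⁻¹) (hQ : 0 ≤ Q)
    {lam₀ : ℝ} (h₀ : 0 < lam₀) {m : ℕ} (hm : 1 ≤ lam₀ * β m) (hlam : 0 < lam) :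
    min (varianceSum β lam₀ / n) (Q / (4 * β m)) ≤ maxRisk β Q n lam := by
  rcases le_or_gt lam lam₀ with hle | hlt
  · refine (min_le_left _ _).trans (le_trans ?_ (varianceSum_div_le_maxRisk hβ hlam.le hQ))
    gcongr
    exact varianceSum_antitoneOn hβ hs hlam h₀ hle
  · refine (min_le_right _ _).trans (div_four_mul_le_maxRisk hβ hlam.le hQ ?_)
    exact hm.trans (by gcongr; exact hβ m)

section ExpSqWeight

noncomputable def expSqWeight (ω : ℝ) (k : ℕ) : ℝ := exp ((k : ℝ) ^ 2 * ω ^ 2 / 2)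

lemma exp_neg_mul_expSqWeight (x : ℝ) (k : ℕ) :
    exp (-x) * expSqWeight ω k = exp ((k : ℝ) ^ 2 * ω ^ 2 / 2 - x) := by
  rw [expSqWeight, ← exp_add]; ring_nf

variable (hω : 0 < ω)
include hω

lemma summable_varianceSum_expSqWeight {lam : ℝ} (hlam : 0 < lam) :
    Summable fun k => ((1 + lam * expSqWeight ω k) ^ 2)⁻¹ := by
  have hq : exp (-ω ^ 2) < 1 := exp_lt_one_iff.2 (by nlinarith)
  refine ((summable_geometric_of_lt_one (exp_pos _).le hq).mul_left (lam ^ 2)⁻¹).of_nonneg_of_le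
    (fun _ => by positivity) (fun k => ?_)
  have hk : (k : ℝ) * ω ^ 2 ≤ (k : ℝ) ^ 2 * ω ^ 2 := by
    gcongr; exact_mod_cast Nat.le_self_pow two_ne_zero k
  calc ((1 + lam * expSqWeight ω k) ^ 2)⁻¹ ≤ ((lam * expSqWeight ω k) ^ 2)⁻¹ := by
        have : 0 < lam * expSqWeight ω k := by unfold expSqWeight; positivity
        gcongr; linarith
    _ = (lam ^ 2)⁻¹ * exp (-((k : ℝ) ^ 2 * ω ^ 2)) := by
        rw [mul_pow, mul_inv, expSqWeight, ← exp_nat_mul, ← exp_neg]; ring_nf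
    _ ≤ (lam ^ 2)⁻¹ * exp (-ω ^ 2) ^ k := by
        rw [← exp_nat_mul]; gcongr; linarith

lemma varianceSum_expSqWeight_le {x : ℝ} {K : ℕ} (hK : x ≤ (K : ℝ) ^ 2 * ω ^ 2 / 2) :
    varianceSum (expSqWeight ω) (exp (-x)) ≤ (K : ℝ) + (1 - exp (-ω ^ 2))⁻¹ := by
  have hs := summable_varianceSum_expSqWeight hω (exp_pos (-x))
  have hq : exp (-ω ^ 2) < 1 := exp_lt_one_iff.2 (by nlinarith)
  have hhead : ∑ k ∈ Finset.range K, ((1 + exp (-x) * expSqWeight ω k) ^ 2)⁻¹ ≤ (K : ℝ) := by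
    refine (Finset.sum_le_card_nsmul _ _ 1 fun k _ => ?_).trans (by simp)
    have : 0 ≤ exp (-x) * expSqWeight ω k := by unfold expSqWeight; positivity
    exact inv_le_one_of_one_le₀ (one_le_pow₀ (by linarith))
  have htail : ∀ j : ℕ, ((1 + exp (-x) * expSqWeight ω (j + K)) ^ 2)⁻¹ ≤ exp (-ω ^ 2) ^ j := by
    intro j
    have hjK : ((K : ℝ) ^ 2 + j) * ω ^ 2 ≤ ((j + K : ℕ) : ℝ) ^ 2 * ω ^ 2 := by
      gcongr; push_cast; nlinarith [(j.cast_nonneg : (0 : ℝ) ≤ j), (K.cast_nonneg : (0 : ℝ) ≤ K),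
        (by exact_mod_cast Nat.le_self_pow two_ne_zero j : (j : ℝ) ≤ j ^ 2)]
    rw [exp_neg_mul_expSqWeight, ← exp_nat_mul]
    calc ((1 + exp (((j + K : ℕ) : ℝ) ^ 2 * ω ^ 2 / 2 - x)) ^ 2)⁻¹
        ≤ (exp (((j + K : ℕ) : ℝ) ^ 2 * ω ^ 2 / 2 - x) ^ 2)⁻¹ := by
          gcongr; linarith
      _ = exp (-(((j + K : ℕ) : ℝ) ^ 2 * ω ^ 2 - 2 * x)) := by
          rw [← exp_nat_mul, ← exp_neg]; ring_nf
      _ ≤ exp (j * -ω ^ 2) := by gcongr; linarith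
  rw [varianceSum, ← hs.sum_add_tsum_nat_add K]
  have hgeo := summable_geometric_of_lt_one (exp_pos (-ω ^ 2)).le hq
  gcongr
  calc ∑' j, ((1 + exp (-x) * expSqWeight ω (j + K)) ^ 2)⁻¹ ≤ ∑' j : ℕ, exp (-ω ^ 2) ^ j :=
        ((summable_nat_add_iff K).2 hs).tsum_le_tsum htail hgeo
    _ = (1 - exp (-ω ^ 2))⁻¹ := tsum_geometric_of_lt_one (exp_pos _).le hq

lemma le_varianceSum_expSqWeight {x a : ℝ} {K : ℕ} (hK : (K : ℝ) ^ 2 * ω ^ 2 / 2 + a ≤ x) :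
    ((K : ℝ) + 1) * ((1 + exp (-a)) ^ 2)⁻¹ ≤ varianceSum (expSqWeight ω) (exp (-x)) := by
  have hs := summable_varianceSum_expSqWeight hω (exp_pos (-x))
  calc ((K : ℝ) + 1) * ((1 + exp (-a)) ^ 2)⁻¹
        = ∑ _k ∈ Finset.range (K + 1), ((1 + exp (-a)) ^ 2)⁻¹ := by simp
    _ ≤ ∑ k ∈ Finset.range (K + 1), ((1 + exp (-x) * expSqWeight ω k) ^ 2)⁻¹ := by
        refine Finset.sum_le_sum fun k hk => ?_
        have hkK : (k : ℝ) ≤ K := by exact_mod_cast Finset.mem_range_succ_iff.1 hk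
        rw [exp_neg_mul_expSqWeight]
        have : (k : ℝ) ^ 2 * ω ^ 2 ≤ (K : ℝ) ^ 2 * ω ^ 2 := by gcongr
        gcongr
        linarith
    _ ≤ varianceSum (expSqWeight ω) (exp (-x)) :=
        hs.sum_le_tsum _ fun _ _ => by positivity

lemma tendsto_varianceSum_expSqWeight :
    Tendsto (fun u => varianceSum (expSqWeight ω) (exp (-u ^ 2)) / u) atTop (𝓝 (√2 / ω)) := by
  set C := (1 - exp (-ω ^ 2))⁻¹
  have hupper : Tendsto (fun u => √2 / ω + (1 + C) / u) atTop (𝓝 (√2 / ω)) := by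
    simpa using (tendsto_const_nhds (x := √2 / ω)).add
      ((tendsto_const_nhds (x := 1 + C)).div_atTop tendsto_id)
  have hlower :
      Tendsto (fun u => √2 / ω * (1 - u⁻¹) * ((1 + exp (-u)) ^ 2)⁻¹) atTop (𝓝 (√2 / ω)) := by
    simpa using (((tendsto_const_nhds (x := (1 : ℝ))).sub tendsto_inv_atTop_zero).const_mul
      (√2 / ω)).mul ((((tendsto_const_nhds (x := (1 : ℝ))).add
        tendsto_exp_neg_atTop_nhds_zero).pow 2).inv₀ (by norm_num))
  refine tendsto_of_tendsto_of_tendsto_of_le_of_le' hlower hupper ?_ ?_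
  · filter_upwards [eventually_ge_atTop 1] with u hu
    set K := ⌊√2 * (u - 1) / ω⌋₊
    have hK : (K : ℝ) * ω ≤ √2 * (u - 1) :=
      (le_div_iff₀ hω).1 (Nat.floor_le (by positivity))
    have hK' : √2 * (u - 1) / ω ≤ K + 1 := (Nat.lt_floor_add_one _).le
    have hcond : (K : ℝ) ^ 2 * ω ^ 2 / 2 + u ≤ u ^ 2 := by
      have : ((K : ℝ) * ω) ^ 2 ≤ (√2 * (u - 1)) ^ 2 := by gcongr
      rw [mul_pow, mul_pow, sq_sqrt zero_le_two] at this
      nlinarith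
    rw [le_div_iff₀ (by linarith)]
    calc √2 / ω * (1 - u⁻¹) * ((1 + exp (-u)) ^ 2)⁻¹ * u
        = √2 * (u - 1) / ω * ((1 + exp (-u)) ^ 2)⁻¹ := by field_simp
      _ ≤ (K + 1) * ((1 + exp (-u)) ^ 2)⁻¹ := by gcongr
      _ ≤ _ := le_varianceSum_expSqWeight hω hcond
  · filter_upwards [eventually_gt_atTop 0] with u hu
    set K := ⌈√2 * u / ω⌉₊
    have hK : √2 * u ≤ K * ω := (div_le_iff₀ hω).1 (Nat.le_ceil _)
    have hK' : (K : ℝ) < √2 * u / ω + 1 := Nat.ceil_lt_add_one (by positivity)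
    have hcond : u ^ 2 ≤ (K : ℝ) ^ 2 * ω ^ 2 / 2 := by
      have : (√2 * u) ^ 2 ≤ ((K : ℝ) * ω) ^ 2 := by gcongr
      rw [mul_pow, mul_pow, sq_sqrt zero_le_two] at this
      linarith
    rw [div_le_iff₀ hu]
    calc varianceSum (expSqWeight ω) (exp (-u ^ 2)) ≤ K + C := varianceSum_expSqWeight_le hω hcond
      _ ≤ √2 * u / ω + 1 + C := by linarith
      _ = (√2 / ω + (1 + C) / u) * u := by field_simp; ring

end ExpSqWeight

lemma tendsto_log_natCast_atTop : Tendsto (fun n : ℕ => log n) atTop atTop :=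
  tendsto_log_atTop.comp tendsto_natCast_atTop_atTop

lemma tendsto_exp_quadratic_div_atTop {c : ℝ} (hc : 0 < c) (b : ℝ) {d : ℝ} (hd : 0 ≤ d) :
    Tendsto (fun u => exp (c * u ^ 2 - b * u - d) / u) atTop atTop := by
  refine tendsto_atTop_mono' _ ?_
    (tendsto_atTop_add_const_right _ (-b - d) (tendsto_id.const_mul_atTop hc))
  filter_upwards [eventually_ge_atTop 1] with u hu
  rw [id, le_div_iff₀ (by linarith)]
  nlinarith [add_one_le_exp (c * u ^ 2 - b * u - d), mul_le_mul_of_nonneg_left hu hd]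

lemma tendsto_mul_spike_atTop (hQ : 0 < Q) {s : ℝ} (hs₀ : 0 ≤ s) (hs₁ : s < 1) :
    Tendsto (fun n : ℕ => n / √(log n) * (Q / (4 * exp ((√(2 * (s ^ 2 * log n)) + ω) ^ 2 / 2))))
      atTop atTop := by
  have hgrowth := ((tendsto_exp_quadratic_div_atTop (by nlinarith : 0 < 1 - s ^ 2) (√2 * s * ω)
    (by positivity : 0 ≤ ω ^ 2 / 2)).const_mul_atTop (by positivity : 0 < Q / 4)).comp
    (tendsto_sqrt_atTop.comp tendsto_log_natCast_atTop)
  have key : ∀ u : ℝ, Q / 4 * (exp ((1 - s ^ 2) * u ^ 2 - √2 * s * ω * u - ω ^ 2 / 2) / u) =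
      exp (u ^ 2) / u * (Q / (4 * exp ((√2 * s * u + ω) ^ 2 / 2))) := by
    intro u
    have : (1 - s ^ 2) * u ^ 2 - √2 * s * ω * u - ω ^ 2 / 2 = u ^ 2 - (√2 * s * u + ω) ^ 2 / 2 := by
      ring_nf; rw [sq_sqrt zero_le_two]; ring
    rw [this, exp_sub]
    field_simp
  refine hgrowth.congr' ?_
  filter_upwards [eventually_ge_atTop 1] with n hn
  have hn : (1 : ℝ) ≤ n := by exact_mod_cast hn
  have hsqrt : √(2 * (s ^ 2 * log n)) = √2 * s * √(log n) := by
    rw [sqrt_mul zero_le_two, sqrt_mul (sq_nonneg s), sqrt_sq hs₀, mul_assoc]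
  simp only [Function.comp, hsqrt]
  rw [key, sq_sqrt (log_nonneg hn), exp_log (by linarith)]

section Periodic

variable (hβe : ∀ k, β (2 * k) = expSqWeight ω k) (hβo : ∀ k, β (2 * k + 1) = expSqWeight ω (k + 1))
include hβe hβo

lemma nonneg_of_periodic (l : ℕ) : 0 ≤ β l := by
  obtain ⟨k, rfl | rfl⟩ := Nat.even_or_odd' l
  · rw [hβe]; exact (exp_pos _).le
  · rw [hβo]; exact (exp_pos _).le

/-- `β` takes the value `expSqWeight ω k` twice for `k ≥ 1` and once for `k = 0`. -/
lemma hasSum_varianceSum_of_periodic (hω : 0 < ω) {lam : ℝ} (hlam : 0 < lam) :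
    HasSum (fun l => ((1 + lam * β l) ^ 2)⁻¹)
      (2 * varianceSum (expSqWeight ω) lam - ((1 + lam) ^ 2)⁻¹) := by
  have hs : HasSum (fun k => ((1 + lam * expSqWeight ω k) ^ 2)⁻¹)
      (varianceSum (expSqWeight ω) lam) := (summable_varianceSum_expSqWeight hω hlam).hasSum
  have he : HasSum (fun k => ((1 + lam * β (2 * k)) ^ 2)⁻¹) (varianceSum (expSqWeight ω) lam) := by
    simpa only [hβe] using hs
  have ho : HasSum (fun k => ((1 + lam * β (2 * k + 1)) ^ 2)⁻¹)
      (varianceSum (expSqWeight ω) lam - ((1 + lam) ^ 2)⁻¹) := by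
    have h0 : expSqWeight ω 0 = 1 := by simp [expSqWeight]
    have h1 := (hasSum_nat_add_iff' 1).2 hs
    simp only [Finset.sum_range_one, h0, mul_one] at h1
    simpa only [hβo] using h1
  have := HasSum.even_add_odd (f := fun l => ((1 + lam * β l) ^ 2)⁻¹) he ho
  rwa [← add_sub_assoc, ← two_mul] at this

lemma varianceSum_of_periodic (hω : 0 < ω) {lam : ℝ} (hlam : 0 < lam) :
    varianceSum β lam = 2 * varianceSum (expSqWeight ω) lam - ((1 + lam) ^ 2)⁻¹ :=
  (hasSum_varianceSum_of_periodic hβe hβo hω hlam).tsum_eq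

lemma tendsto_varianceSum_of_periodic (hω : 0 < ω) :
    Tendsto (fun u => varianceSum β (exp (-u ^ 2)) / u) atTop (𝓝 (2 * √2 / ω)) := by
  have hexp : Tendsto (fun u : ℝ => exp (-u ^ 2)) atTop (𝓝 0) :=
    tendsto_exp_atBot.comp (tendsto_neg_atTop_atBot.comp (tendsto_pow_atTop two_ne_zero))
  have hsmall := ((((tendsto_const_nhds (x := (1 : ℝ))).add hexp).pow 2).inv₀
    (by norm_num)).div_atTop tendsto_id
  have hlim := ((tendsto_varianceSum_expSqWeight hω).const_mul 2).sub hsmall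
  rw [sub_zero, ← mul_div_assoc] at hlim
  refine hlim.congr fun u => ?_
  rw [id, varianceSum_of_periodic hβe hβo hω (exp_pos _)]
  ring

lemma tendsto_varianceSum_div_sqrt_log (hω : 0 < ω) {x : ℕ → ℝ} {r : ℝ} (hr : 0 < r)
    (hx : Tendsto (fun n => x n / log n) atTop (𝓝 r)) :
    Tendsto (fun n => varianceSum β (exp (-x n)) / √(log n)) atTop (𝓝 (2 * √2 / ω * √r)) := by
  have hlog := tendsto_log_natCast_atTop
  have hxtop : Tendsto x atTop atTop := by
    refine (hx.pos_mul_atTop hr hlog).congr' ?_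
    filter_upwards [hlog.eventually_gt_atTop 0] with n hn
    exact div_mul_cancel₀ _ hn.ne'
  have hV := (tendsto_varianceSum_of_periodic hβe hβo hω).comp (tendsto_sqrt_atTop.comp hxtop)
  refine (hV.mul ((continuous_sqrt.tendsto r).comp hx)).congr' ?_
  filter_upwards [hxtop.eventually_gt_atTop 0, hlog.eventually_gt_atTop 0] with n hxn hn
  have : 0 < √(x n) := sqrt_pos.2 hxn
  simp only [Function.comp, sq_sqrt hxn.le, sqrt_div' _ hn.le]
  field_simp

omit hβo in
lemma exists_exp_le_le (hω : 0 < ω) {x : ℝ} (hx : 0 ≤ x) :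
    ∃ m, exp x ≤ β m ∧ β m ≤ exp ((√(2 * x) + ω) ^ 2 / 2) := by
  set K := ⌈√(2 * x) / ω⌉₊
  have hK : √(2 * x) ≤ K * ω := (div_le_iff₀ hω).1 (Nat.le_ceil _)
  have hK' : (K : ℝ) * ω ≤ √(2 * x) + ω := by
    have := Nat.ceil_lt_add_one (div_nonneg (sqrt_nonneg (2 * x)) hω.le)
    have := (lt_div_iff₀ hω).1 (show (K : ℝ) - 1 < √(2 * x) / ω by linarith)
    linarith
  refine ⟨2 * K, ?_, ?_⟩ <;> rw [hβe, expSqWeight] <;> gcongr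
  · have := pow_le_pow_left₀ (sqrt_nonneg _) hK 2
    rw [sq_sqrt (by positivity), mul_pow] at this
    linarith
  · rw [← mul_pow]; gcongr

lemma tendsto_mul_maxRisk (hω : 0 < ω) (hQ : 0 ≤ Q) {lam : ℕ → ℝ} (hlam : ∀ n, 0 < lam n)
    (hlam₁ : Tendsto (fun n => -log (lam n) / log n) atTop (𝓝 1))
    (hlam₂ : Tendsto (fun n : ℕ => n * lam n / √(log n)) atTop (𝓝 0)) :
    Tendsto (fun n : ℕ => n / √(log n) * maxRisk β Q n (lam n)) atTop (𝓝 (2 * √2 / ω)) := by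
  have hβ := nonneg_of_periodic hβe hβo
  have hV : Tendsto (fun n : ℕ => varianceSum β (lam n) / √(log n)) atTop (𝓝 (2 * √2 / ω)) := by
    simpa [exp_log (hlam _)] using tendsto_varianceSum_div_sqrt_log hβe hβo hω one_pos hlam₁
  have hV' : Tendsto (fun n : ℕ => varianceSum β (lam n) / √(log n) +
      Q / 4 * (n * lam n / √(log n))) atTop (𝓝 (2 * √2 / ω)) := by
    simpa using hV.add (hlam₂.const_mul (Q / 4))
  refine tendsto_of_tendsto_of_tendsto_of_le_of_le' hV hV' ?_ ?_ <;>
    filter_upwards [eventually_ne_atTop 0] with n hn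
  · calc varianceSum β (lam n) / √(log n) = n / √(log n) * (varianceSum β (lam n) / n) := by
          field_simp
      _ ≤ _ := by gcongr; exact varianceSum_div_le_maxRisk hβ (hlam n).le hQ
  · calc n / √(log n) * maxRisk β Q n (lam n)
          ≤ n / √(log n) * (varianceSum β (lam n) / n + lam n * Q / 4) := by
          gcongr; exact maxRisk_le hβ (hlam n).le hQ
      _ = _ := by field_simp

lemma min_le_sInf_maxRisk (hω : 0 < ω) (hQ : 0 ≤ Q) {x : ℝ} (hx : 0 ≤ x) :
    min (varianceSum β (exp (-x)) / n) (Q / (4 * exp ((√(2 * x) + ω) ^ 2 / 2))) ≤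
      sInf (maxRisk β Q n '' Set.Ioi 0) := by
  obtain ⟨m, hm₁, hm₂⟩ := exists_exp_le_le hβe hω hx
  have hm : 1 ≤ exp (-x) * β m :=
    calc (1 : ℝ) = exp (-x) * exp x := by rw [← exp_add]; simp
      _ ≤ exp (-x) * β m := by gcongr
  have hs : ∀ t, 0 < t → Summable fun l => ((1 + t * β l) ^ 2)⁻¹ :=
    fun t ht => (hasSum_varianceSum_of_periodic hβe hβo hω ht).summable
  refine le_csInf ⟨_, 1, Set.mem_Ioi.2 one_pos, rfl⟩ ?_
  rintro _ ⟨lam, hlam, rfl⟩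
  refine le_trans ?_ (min_le_maxRisk (nonneg_of_periodic hβe hβo) hs hQ (exp_pos _) hm hlam)
  have : 0 < β m := (exp_pos _).trans_le hm₁
  gcongr

lemma eventually_lt_mul_sInf_maxRisk (hω : 0 < ω) (hQ : 0 < Q) {a : ℝ} (ha : a < 2 * √2 / ω) :
    ∀ᶠ n : ℕ in atTop, a < n / √(log n) * sInf (maxRisk β Q n '' Set.Ioi 0) := by
  have hL : 0 < 2 * √2 / ω := by positivity
  obtain ⟨s, hs, hs₁⟩ := exists_between
    (max_lt ((div_lt_one hL).2 ha) zero_lt_one : max (a / (2 * √2 / ω)) 0 < 1)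
  have hs₀ : 0 < s := (le_max_right _ _).trans_lt hs
  have has : a < 2 * √2 / ω * s := (div_lt_iff₀' hL).1 ((le_max_left _ _).trans_lt hs)
  have hratio : Tendsto (fun n : ℕ => s ^ 2 * log n / log n) atTop (𝓝 (s ^ 2)) := by
    refine tendsto_const_nhds.congr' ?_
    filter_upwards [tendsto_log_natCast_atTop.eventually_gt_atTop 0] with n hn
    rw [mul_div_cancel_right₀ _ hn.ne']
  have hvar := tendsto_varianceSum_div_sqrt_log hβe hβo hω (by positivity) hratio
  rw [sqrt_sq hs₀.le] at hvar
  filter_upwards [hvar.eventually (lt_mem_nhds has),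
    (tendsto_mul_spike_atTop hQ hs₀.le hs₁).eventually_gt_atTop a,
    eventually_ne_atTop 0] with n hvar hspike hn
  calc a < n / √(log n) * min (varianceSum β (exp (-(s ^ 2 * log n))) / n)
        (Q / (4 * exp ((√(2 * (s ^ 2 * log n)) + ω) ^ 2 / 2))) := by
        rw [mul_min_of_nonneg _ _ (by positivity)]
        refine lt_min ?_ hspike
        convert hvar using 1
        field_simp
    _ ≤ n / √(log n) * sInf (maxRisk β Q n '' Set.Ioi 0) := by
        gcongr
        exact min_le_sInf_maxRisk hβe hβo hω hQ.le (by positivity)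

end Periodic

end PeriodicGaussian

open PeriodicGaussian in
/-- **Theorem 2.** The periodic Gaussian regularization is asymptotically minimax over the
infinite-order Sobolev ellipsoid `H_ω^∞(Q)`, with asymptotic maximal risk
`2√2 ω⁻¹ n⁻¹ (log n)^{1/2}`, provided `log(1/λ_n) ∼ log n` and `λ_n = o(n⁻¹ (log n)^{1/2})`. -/
theorem stmt_1 (ω Q : ℝ) (hω : 0 < ω) (hQ : 0 < Q)
    (β : ℕ → ℝ) (hβ0 : β 0 = 1)
    (hβodd : ∀ l : ℕ, 1 ≤ l → β (2 * l - 1) = Real.exp ((l : ℝ) ^ 2 * ω ^ 2 / 2))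
    (hβeven : ∀ l : ℕ, 1 ≤ l → β (2 * l) = Real.exp ((l : ℝ) ^ 2 * ω ^ 2 / 2))
    (lam : ℕ → ℝ) (hlam : ∀ n : ℕ, lam n ∈ Set.Ioo (0 : ℝ) 1)
    (hlam1 : Tendsto (fun n : ℕ => Real.log (1 / lam n) / Real.log n) atTop (nhds 1))
    (hlam2 : Tendsto (fun n : ℕ => (n : ℝ) * lam n / Real.sqrt (Real.log n)) atTop (nhds 0)) :
    Tendsto (fun n : ℕ => (n : ℝ) / Real.sqrt (Real.log n) *
        ⨆ θ ∈ ellipsoid β Q, regRisk β n (lam n) θ)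
      atTop (nhds (2 * Real.sqrt 2 / ω)) ∧
    Tendsto (fun n : ℕ => (n : ℝ) / Real.sqrt (Real.log n) *
        sInf ((fun l : ℝ => ⨆ θ ∈ ellipsoid β Q, regRisk β n l θ) '' Set.Ioi 0))
      atTop (nhds (2 * Real.sqrt 2 / ω)) := by
  have hβe : ∀ k, β (2 * k) = expSqWeight ω k := by
    rintro (_ | k)
    · simp [hβ0, expSqWeight]
    · exact hβeven (k + 1) (by omega)
  have hβo : ∀ k, β (2 * k + 1) = expSqWeight ω (k + 1) := fun k =>
    hβodd (k + 1) (by omega)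
  have hlog : Tendsto (fun n : ℕ => -log (lam n) / log n) atTop (𝓝 1) := by
    simpa only [one_div, log_inv] using hlam1
  have hmax := tendsto_mul_maxRisk hβe hβo hω hQ.le (fun n => (hlam n).1) hlog hlam2
  refine ⟨hmax, tendsto_order.2 ⟨fun a ha => eventually_lt_mul_sInf_maxRisk hβe hβo hω hQ ha,
    fun a ha => ?_⟩⟩
  filter_upwards [hmax.eventually (gt_mem_nhds ha)] with n hn
  refine lt_of_le_of_lt ?_ hn
  gcongr
  exact sInf_maxRisk_le (nonneg_of_periodic hβe hβo) hQ.le (hlam n).1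
end

section
/- Let ω > 0 and define β : ℕ → ℝ by β_0 = 1 and β_{2l−1} = β_{2l} = exp(l²ω²/2) for l ≥ 1. Then, as λ → 0⁺, ∑_{l=0}^∞ (1 + λ β_l)^{−2} ∼ 2√2 ω^{−1} (−log λ)^{1/2}; that is, lim_{λ→0⁺} (∑'_{l} (1 + λβ_l)^{−2}) / (2√2 ω^{−1} (−log λ)^{1/2}) = 1. Consequently the total variance of the periodic Gaussian regularization estimator satisfies ∑_l Var θ̂_l = (1/n)∑_l (1+λβ_l)^{−2} ∼ 2√2 ω^{−1} n^{−1} (−log λ)^{1/2}. -/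
/-!
Put `L = √(-2 log λ) / ω`, so that `λ = exp (-L²ω²/2)` and `λ β_{2k-1} = λ β_{2k} = exp ((k² - L²) ω²/2)`.
Apart from `l = 0`, the series is therefore twice `∑_{k ≥ 1} (1 + exp ((k² - L²) ω²/2))⁻²`. Terms with
`k ≤ L - 1` are at least `(1 + exp (-(L - 1/2) ω²))⁻²`, which tends to `1`, while the terms past `⌈L⌉`
are dominated by a geometric series of ratio `exp (-ω²)`. Hence the series is `2L + O(1)`, and
`2L = 2 √2 ω⁻¹ √(-log λ)`.
-/

open Real Filter Topology

theorem hasSum_cons_doubled {M : Type*} [AddCommMonoid M] [TopologicalSpace M] [ContinuousAdd M]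
    {f g : ℕ → M} {s : M} (hodd : ∀ k, f (2 * k + 1) = g k) (heven : ∀ k, f (2 * k + 2) = g k)
    (hg : HasSum g s) : HasSum f (f 0 + s + s) := by
  have hf_even : HasSum (fun k => f (2 * k)) (f 0 + s) :=
    HasSum.zero_add (f := fun k => f (2 * k)) (by simpa only [mul_add, heven] using hg)
  exact hf_even.even_add_odd (by simpa only [hodd] using hg)

noncomputable def invSqOneAddExp (x : ℝ) : ℝ := ((1 + exp x) ^ 2)⁻¹

namespace invSqOneAddExp

theorem pos (x : ℝ) : 0 < invSqOneAddExp x := by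
  unfold invSqOneAddExp; positivity

theorem le_one (x : ℝ) : invSqOneAddExp x ≤ 1 := by
  unfold invSqOneAddExp
  exact inv_le_one_of_one_le₀ (one_le_pow₀ (by linarith [exp_pos x]))

theorem le_exp_neg_two_mul (x : ℝ) : invSqOneAddExp x ≤ exp (-(2 * x)) := by
  unfold invSqOneAddExp
  rw [exp_neg, mul_comm, exp_mul, rpow_two]
  exact inv_anti₀ (by positivity) (pow_le_pow_left₀ (exp_pos x).le (by linarith) 2)

theorem antitone : Antitone invSqOneAddExp := fun x y hxy =>
  inv_anti₀ (by positivity) (pow_le_pow_left₀ (by positivity) (by gcongr) 2)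

theorem tendsto_atBot : Tendsto invSqOneAddExp atBot (𝓝 1) := by
  have hcont : Tendsto (fun u : ℝ => ((1 + u) ^ 2)⁻¹) (𝓝 0) (𝓝 1) := by
    have h : Tendsto (fun u : ℝ => (1 + u) ^ 2) (𝓝 0) (𝓝 1) := by
      simpa using ((tendsto_const_nhds (x := (1 : ℝ))).add (tendsto_id (x := 𝓝 (0 : ℝ)))).pow 2
    simpa using h.inv₀ one_ne_zero
  exact hcont.comp tendsto_exp_atBot

end invSqOneAddExp

noncomputable def shrinkageTerm (ω L : ℝ) (k : ℕ) : ℝ :=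
  invSqOneAddExp ((((k : ℝ) + 1) ^ 2 - L ^ 2) * ω ^ 2 / 2)

noncomputable def shrinkageSum (ω L : ℝ) : ℝ := ∑' k, shrinkageTerm ω L k

section shrinkageSum

variable {ω L : ℝ}

theorem shrinkageTerm_add_ceil_le (hL : 0 ≤ L) (n : ℕ) :
    shrinkageTerm ω L (n + ⌈L⌉₊) ≤ exp (-ω ^ 2) ^ n := by
  refine (invSqOneAddExp.le_exp_neg_two_mul _).trans ?_
  rw [← exp_nat_mul, exp_le_exp]
  have hLM : L ≤ ⌈L⌉₊ := Nat.le_ceil L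
  have hgap : (n : ℝ) ≤ (((n + ⌈L⌉₊ : ℕ) : ℝ) + 1) ^ 2 - L ^ 2 := by
    push_cast; nlinarith
  nlinarith [mul_le_mul_of_nonneg_right hgap (sq_nonneg ω)]

theorem summable_shrinkageTerm (hω : 0 < ω) (hL : 0 ≤ L) : Summable (shrinkageTerm ω L) :=
  (summable_nat_add_iff ⌈L⌉₊).1 <|
    (summable_geometric_of_lt_one (exp_pos _).le (exp_lt_one_iff.2 (by nlinarith))).of_nonneg_of_le
      (fun _ => (invSqOneAddExp.pos _).le) (shrinkageTerm_add_ceil_le hL)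

theorem shrinkageSum_le (hω : 0 < ω) (hL : 0 ≤ L) :
    shrinkageSum ω L ≤ L + 1 + (1 - exp (-ω ^ 2))⁻¹ := by
  have hr : exp (-ω ^ 2) < 1 := exp_lt_one_iff.2 (by nlinarith)
  have hsum := summable_shrinkageTerm hω hL
  have hhead : ∑ k ∈ Finset.range ⌈L⌉₊, shrinkageTerm ω L k ≤ L + 1 :=
    calc ∑ k ∈ Finset.range ⌈L⌉₊, shrinkageTerm ω L k
        ≤ ∑ _k ∈ Finset.range ⌈L⌉₊, (1 : ℝ) :=
          Finset.sum_le_sum fun _ _ => invSqOneAddExp.le_one _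
      _ ≤ L + 1 := by simpa using (Nat.ceil_lt_add_one hL).le
  have htail : ∑' n, shrinkageTerm ω L (n + ⌈L⌉₊) ≤ (1 - exp (-ω ^ 2))⁻¹ :=
    hasSum_le (shrinkageTerm_add_ceil_le hL) ((summable_nat_add_iff _).2 hsum).hasSum
      (hasSum_geometric_of_lt_one (exp_pos _).le hr)
  rw [shrinkageSum, ← hsum.sum_add_tsum_nat_add ⌈L⌉₊]
  linarith

theorem le_shrinkageSum (hω : 0 < ω) (hL : 1 ≤ L) :
    (L - 2) * invSqOneAddExp ((1 / 2 - L) * ω ^ 2) ≤ shrinkageSum ω L := by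
  set N := ⌊L - 1⌋₊
  have hN : L - 2 ≤ N := by linarith [Nat.lt_floor_add_one (L - 1)]
  have hterm : ∀ k ∈ Finset.range N, invSqOneAddExp ((1 / 2 - L) * ω ^ 2) ≤ shrinkageTerm ω L k := by
    intro k hk
    have hkN : (k : ℝ) + 1 ≤ L - 1 := by
      have : ((k + 1 : ℕ) : ℝ) ≤ N := by exact_mod_cast Finset.mem_range.1 hk
      push_cast at this
      linarith [Nat.floor_le (by linarith : 0 ≤ L - 1)]
    apply invSqOneAddExp.antitone
    have : ((k : ℝ) + 1) ^ 2 ≤ (L - 1) ^ 2 := pow_le_pow_left₀ (by positivity) hkN 2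
    nlinarith [mul_le_mul_of_nonneg_right this (sq_nonneg ω)]
  calc (L - 2) * invSqOneAddExp ((1 / 2 - L) * ω ^ 2)
      ≤ N * invSqOneAddExp ((1 / 2 - L) * ω ^ 2) :=
        mul_le_mul_of_nonneg_right hN (invSqOneAddExp.pos _).le
    _ ≤ ∑ k ∈ Finset.range N, shrinkageTerm ω L k := by
        simpa using Finset.card_nsmul_le_sum _ _ _ hterm
    _ ≤ shrinkageSum ω L :=
        (summable_shrinkageTerm hω (by linarith)).sum_le_tsum _ fun _ _ => (invSqOneAddExp.pos _).le

theorem tendsto_shrinkageSum_div (hω : 0 < ω) :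
    Tendsto (fun L => shrinkageSum ω L / L) atTop (𝓝 1) := by
  have hinv : Tendsto (fun L : ℝ => L⁻¹) atTop (𝓝 0) := tendsto_inv_atTop_zero
  have hlower : Tendsto (fun L => (1 - 2 * L⁻¹) * invSqOneAddExp ((1 / 2 - L) * ω ^ 2))
      atTop (𝓝 1) := by
    have hexp : Tendsto (fun L : ℝ => (1 / 2 - L) * ω ^ 2) atTop atBot :=
      (tendsto_atBot_add_const_left _ _ tendsto_neg_atTop_atBot).atBot_mul_const (by positivity)
    simpa using ((hinv.const_mul 2).const_sub 1).mul (invSqOneAddExp.tendsto_atBot.comp hexp)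
  have hupper : Tendsto (fun L => 1 + (1 + (1 - exp (-ω ^ 2))⁻¹) * L⁻¹) atTop (𝓝 1) := by
    simpa using (hinv.const_mul (1 + (1 - exp (-ω ^ 2))⁻¹)).const_add 1
  refine tendsto_of_tendsto_of_tendsto_of_le_of_le' hlower hupper ?_ ?_
  all_goals filter_upwards [eventually_ge_atTop 1] with L hL
  · calc (1 - 2 * L⁻¹) * invSqOneAddExp ((1 / 2 - L) * ω ^ 2)
        = (L - 2) * invSqOneAddExp ((1 / 2 - L) * ω ^ 2) / L := by field_simp
      _ ≤ shrinkageSum ω L / L := by gcongr; exact le_shrinkageSum hω hL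
  · calc shrinkageSum ω L / L ≤ (L + 1 + (1 - exp (-ω ^ 2))⁻¹) / L := by
          gcongr; exact shrinkageSum_le hω (by linarith)
      _ = 1 + (1 + (1 - exp (-ω ^ 2))⁻¹) * L⁻¹ := by field_simp; ring

end shrinkageSum

theorem tsum_eq_add_two_mul_shrinkageSum {ω lam : ℝ} (hω : 0 < ω) (hlam0 : 0 < lam)
    (hlam1 : lam ≤ 1) {β : ℕ → ℝ} (hβ0 : β 0 = 1)
    (hβodd : ∀ l : ℕ, 1 ≤ l → β (2 * l - 1) = exp ((l : ℝ) ^ 2 * ω ^ 2 / 2))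
    (hβeven : ∀ l : ℕ, 1 ≤ l → β (2 * l) = exp ((l : ℝ) ^ 2 * ω ^ 2 / 2)) :
    ∑' l, ((1 + lam * β l) ^ 2)⁻¹ =
      ((1 + lam) ^ 2)⁻¹ + 2 * shrinkageSum ω (√(2 * -log lam) / ω) := by
  set L := √(2 * -log lam) / ω
  have hlog : log lam = -(L ^ 2 * ω ^ 2 / 2) := by
    rw [div_pow, sq_sqrt (by linarith [log_nonpos hlam0.le hlam1])]
    field_simp
  have hterm : ∀ k : ℕ,
      ((1 + lam * exp ((((k + 1 : ℕ) : ℝ)) ^ 2 * ω ^ 2 / 2)) ^ 2)⁻¹ = shrinkageTerm ω L k := by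
    intro k
    rw [shrinkageTerm, invSqOneAddExp, ← exp_log hlam0, ← exp_add, hlog]
    push_cast
    ring_nf
  have hsum : HasSum (fun l => ((1 + lam * β l) ^ 2)⁻¹) (((1 + lam * β 0) ^ 2)⁻¹ +
      shrinkageSum ω L + shrinkageSum ω L) := by
    refine hasSum_cons_doubled (fun k => ?_) (fun k => ?_)
      (summable_shrinkageTerm hω (by positivity)).hasSum
    · rw [← hterm, ← hβodd (k + 1) (by omega), show 2 * (k + 1) - 1 = 2 * k + 1 by omega]
    · rw [← hterm, ← hβeven (k + 1) (by omega), mul_add, mul_one]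
  rw [hsum.tsum_eq, hβ0]
  ring

/-- **Lemma 1.** For `ω > 0` and `β` given by `β 0 = 1`,
`β (2l-1) = β (2l) = exp (l² ω² / 2)` for `l ≥ 1`, we have, as `λ → 0⁺`,
`∑' l, (1 + λ β l)⁻² ∼ 2 √2 ω⁻¹ (−log λ)^{1/2}`. -/
theorem stmt_4 (ω : ℝ) (hω : 0 < ω)
    (β : ℕ → ℝ) (hβ0 : β 0 = 1)
    (hβodd : ∀ l : ℕ, 1 ≤ l → β (2 * l - 1) = Real.exp ((l : ℝ) ^ 2 * ω ^ 2 / 2))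
    (hβeven : ∀ l : ℕ, 1 ≤ l → β (2 * l) = Real.exp ((l : ℝ) ^ 2 * ω ^ 2 / 2)) :
    Tendsto (fun lam : ℝ =>
        (∑' l : ℕ, ((1 + lam * β l) ^ 2)⁻¹) /
          (2 * Real.sqrt 2 * ω⁻¹ * Real.sqrt (-Real.log lam)))
      (nhdsWithin 0 (Set.Ioi 0)) (nhds 1) := by
  set L : ℝ → ℝ := fun lam => √(2 * -log lam) / ω
  have hL : Tendsto L (𝓝[>] 0) atTop :=
    (tendsto_sqrt_atTop.comp <| (tendsto_neg_atBot_atTop.comp tendsto_log_nhdsGT_zero).const_mul_atTop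
      two_pos).atTop_div_const hω
  have hhead : Tendsto (fun lam => ((1 + lam) ^ 2)⁻¹ / (2 * L lam)) (𝓝[>] 0) (𝓝 0) :=
    (((continuous_const.add continuous_id).pow 2).continuousAt.inv₀ (by norm_num)).tendsto
      |>.mono_left nhdsWithin_le_nhds |>.div_atTop (hL.const_mul_atTop two_pos)
  have hsplit : ∀ᶠ lam in 𝓝[>] 0, ((1 + lam) ^ 2)⁻¹ / (2 * L lam) + shrinkageSum ω (L lam) / L lam
      = (∑' l, ((1 + lam * β l) ^ 2)⁻¹) / (2 * √2 * ω⁻¹ * √(-log lam)) := by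
    filter_upwards [Ioo_mem_nhdsGT one_pos] with lam ⟨hlam0, hlam1⟩
    have hLpos : 0 < L lam := div_pos (sqrt_pos.2 (by linarith [log_neg hlam0 hlam1])) hω
    have hden : 2 * √2 * ω⁻¹ * √(-log lam) = 2 * L lam := by
      simp only [L, sqrt_mul zero_le_two]
      ring
    have htsum : ∑' l, ((1 + lam * β l) ^ 2)⁻¹ = ((1 + lam) ^ 2)⁻¹ + 2 * shrinkageSum ω (L lam) :=
      tsum_eq_add_two_mul_shrinkageSum hω hlam0 hlam1.le hβ0 hβodd hβeven
    rw [htsum, hden]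
    field_simp
  simpa using (hhead.add ((tendsto_shrinkageSum_div hω).comp hL)).congr' hsplit
end

section
/- As λ → 0⁺, ∫_{log λ}^{0} (1 + e^{y})^{−2} (y − log λ)^{−1/2} dy ∼ 2(−log λ)^{1/2}; that is, the ratio of the integral to 2(−log λ)^{1/2} tends to 1 as λ → 0⁺. -/
open Real Filter Topology MeasureTheory intervalIntegral

/-!
Write `M = log λ → -∞`. The substitution `y = M s` turns the integral into
`√(-M) ∫₀¹ (1 + e^{M s})⁻² (1 - s)^{-1/2} ds`. For every `s ∈ (0, 1]` the weight
`(1 + e^{M s})⁻²` tends to `1`, and it is bounded by `1`, so by dominated convergence the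
remaining integral tends to `∫₀¹ (1 - s)^{-1/2} ds = 2`.
-/

lemma integral_mul_inv_sqrt_sub_eq {M : ℝ} (hM : M < 0) (f : ℝ → ℝ) :
    ∫ y in M..0, f y * (√(y - M))⁻¹ = √(-M) * ∫ s in 0..1, f (M * s) * (√(1 - s))⁻¹ := by
  have hpt : ∀ s, f (M * s) * (√(M * s - M))⁻¹ = (√(-M))⁻¹ * (f (M * s) * (√(1 - s))⁻¹) := by
    intro s
    rw [show M * s - M = -M * (1 - s) by ring, sqrt_mul (by linarith), mul_inv]
    ring
  have hcov := integral_comp_mul_left (fun y => f y * (√(y - M))⁻¹) (a := 0) (b := 1) hM.ne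
  simp only [hpt, intervalIntegral.integral_const_mul, mul_zero, mul_one, smul_eq_mul] at hcov
  rw [integral_symm M] at hcov
  generalize ∫ y in M..0, f y * (√(y - M))⁻¹ = I at *
  generalize ∫ s in 0..1, f (M * s) * (√(1 - s))⁻¹ = J at *
  have hsqrt : √(-M) ≠ 0 := (sqrt_pos.2 (by linarith)).ne'
  rw [inv_mul_eq_iff_eq_mul₀ hsqrt] at hcov
  rw [hcov, ← mul_assoc, mul_self_sqrt (by linarith)]
  field_simp [hM.ne]

lemma inv_sqrt_eq_rpow {x : ℝ} (hx : 0 ≤ x) : (√x)⁻¹ = x ^ (-(1 / 2) : ℝ) := by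
  rw [sqrt_eq_rpow, rpow_neg hx]

lemma intervalIntegrable_inv_sqrt_one_sub :
    IntervalIntegrable (fun s => (√(1 - s))⁻¹) volume 0 1 := by
  have h := (intervalIntegrable_rpow' (a := 0) (b := 1) (r := -(1 / 2))
    (by norm_num)).comp_sub_left 1
  simp only [sub_self, sub_zero] at h
  refine h.symm.congr fun s hs => ?_
  rw [Set.uIoc_of_le zero_le_one] at hs
  exact (inv_sqrt_eq_rpow (by linarith [hs.2])).symm

lemma integral_inv_sqrt_one_sub : ∫ s in (0 : ℝ)..1, (√(1 - s))⁻¹ = 2 := by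
  rw [integral_comp_sub_left (fun x => (√x)⁻¹) 1, sub_self, sub_zero,
    integral_congr fun x hx => inv_sqrt_eq_rpow (Set.uIcc_of_le (zero_le_one (α := ℝ)) ▸ hx).1,
    integral_rpow (Or.inl (by norm_num))]
  norm_num

lemma tendsto_integral_comp_mul_mul_of_tendsto_atBot {f g : ℝ → ℝ} {a b C : ℝ} (hb : 0 ≤ b)
    (hf : Continuous f) (hfC : ∀ x, ‖f x‖ ≤ C) (hfa : Tendsto f atBot (𝓝 a))
    (hg : IntervalIntegrable g volume 0 b) :
    Tendsto (fun M => ∫ s in 0..b, f (M * s) * g s) atBot (𝓝 (a * ∫ s in 0..b, g s)) := by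
  rw [← intervalIntegral.integral_const_mul]
  refine tendsto_integral_filter_of_dominated_convergence (fun s => C * ‖g s‖)
    (Eventually.of_forall fun M => ?_) (Eventually.of_forall fun M => ?_)
    (hg.norm.const_mul C) (Eventually.of_forall fun s hs => ?_)
  · exact (hf.comp (continuous_const_mul M)).aestronglyMeasurable.mul
      hg.def'.aestronglyMeasurable
  · refine Eventually.of_forall fun s _ => ?_
    rw [norm_mul]
    exact mul_le_mul_of_nonneg_right (hfC _) (norm_nonneg _)
  · rw [Set.uIoc_of_le hb] at hs
    exact (hfa.comp (tendsto_id.atBot_mul_const hs.1)).mul_const (g s)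

lemma continuous_inv_one_add_exp_sq : Continuous fun y => ((1 + exp y) ^ 2)⁻¹ :=
  Continuous.inv₀ (by fun_prop) fun y => by positivity

lemma norm_inv_one_add_exp_sq_le_one (y : ℝ) : ‖((1 + exp y) ^ 2)⁻¹‖ ≤ 1 := by
  rw [norm_inv, norm_pow, Real.norm_of_nonneg (by positivity)]
  exact inv_le_one_of_one_le₀ (one_le_pow₀ (by linarith [exp_pos y]))

lemma tendsto_inv_one_add_exp_sq_atBot :
    Tendsto (fun y => ((1 + exp y) ^ 2)⁻¹) atBot (𝓝 1) := by
  simpa using ((tendsto_exp_atBot.const_add 1).pow 2).inv₀ (by norm_num)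

/-- As `λ → 0⁺`,
`∫_{log λ}^{0} (1 + e^y)⁻² (y − log λ)^{-1/2} dy ∼ 2 (−log λ)^{1/2}`. -/
theorem stmt_7 :
    Tendsto (fun lam : ℝ =>
        (∫ y in (Real.log lam)..0,
            ((1 + Real.exp y) ^ 2)⁻¹ * (Real.sqrt (y - Real.log lam))⁻¹) /
          (2 * Real.sqrt (-Real.log lam)))
      (nhdsWithin 0 (Set.Ioi 0)) (nhds 1) := by
  have hJ := (tendsto_integral_comp_mul_mul_of_tendsto_atBot zero_le_one
    continuous_inv_one_add_exp_sq norm_inv_one_add_exp_sq_le_one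
    tendsto_inv_one_add_exp_sq_atBot intervalIntegrable_inv_sqrt_one_sub).comp
    tendsto_log_nhdsGT_zero
  rw [integral_inv_sqrt_one_sub, one_mul] at hJ
  refine (div_self (two_ne_zero (α := ℝ)) ▸ hJ.div_const 2).congr' ?_
  filter_upwards [Ioo_mem_nhdsGT one_pos] with lam hlam
  have hlog : log lam < 0 := log_neg hlam.1 hlam.2
  rw [Function.comp_apply, integral_mul_inv_sqrt_sub_eq hlog, mul_comm 2,
    mul_div_mul_left _ _ (sqrt_pos.2 (neg_pos.2 hlog)).ne']
end

section
/- Let ω > 0. Then, as λ → 0⁺, ∫_{0}^{∞} (1 + λ e^{x²ω²/2})^{−2} dx ∼ √2 ω^{−1} (−log λ)^{1/2}; that is, lim_{λ→0⁺} (∫_0^∞ (1 + λ e^{x²ω²/2})^{−2} dx) / (√2 ω^{−1} (−log λ)^{1/2}) = 1. -/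
/-!
With `L = -log λ`, the substitution `y = ω x / √2` turns the integral into `√2 ω⁻¹ J(L)`, where
`J(L) = ∫_0^∞ (1 + e^{y² - L})⁻² dy`. The integrand is close to `1` for `y < √L` and Gaussian-small
beyond: bounding it below on `[0, √L - 1]` by its value at `√L - 1`, and above by `1` on
`[0, √L + 1]` and by `e^{2L - 2y²}` on the tail, gives `(√L - 1)(1 + e^{1 - 2√L})⁻² ≤ J(L) ≤ √L + 2`.
-/

open Real Filter MeasureTheory Set Topology

noncomputable def fermiSqIntegral (L : ℝ) : ℝ :=
  ∫ x in Ioi 0, ((1 + exp (x ^ 2 - L)) ^ 2)⁻¹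

lemma inv_one_add_exp_sq_le_exp (t : ℝ) : ((1 + exp t) ^ 2)⁻¹ ≤ exp (-2 * t) := by
  have h : exp t ^ 2 ≤ (1 + exp t) ^ 2 := by gcongr; linarith
  calc ((1 + exp t) ^ 2)⁻¹ ≤ (exp t ^ 2)⁻¹ := inv_anti₀ (by positivity) h
    _ = exp (-2 * t) := by rw [← exp_nat_mul, ← exp_neg]; ring_nf

lemma integrable_inv_one_add_exp_sq_sub (L : ℝ) :
    Integrable fun x : ℝ => ((1 + exp (x ^ 2 - L)) ^ 2)⁻¹ := by
  refine ((integrable_exp_neg_mul_sq two_pos).const_mul (exp (2 * L))).mono'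
    (by fun_prop) (ae_of_all _ fun x => ?_)
  rw [norm_of_nonneg (by positivity), ← exp_add]
  exact (inv_one_add_exp_sq_le_exp _).trans_eq (by ring_nf)

lemma mul_le_fermiSqIntegral (L : ℝ) {b : ℝ} (hb : 0 ≤ b) :
    b * ((1 + exp (b ^ 2 - L)) ^ 2)⁻¹ ≤ fermiSqIntegral L := by
  have hint := (integrable_inv_one_add_exp_sq_sub L).integrableOn (s := Ioi 0)
  calc b * ((1 + exp (b ^ 2 - L)) ^ 2)⁻¹ = ∫ _ in Ioc 0 b, ((1 + exp (b ^ 2 - L)) ^ 2)⁻¹ := by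
        rw [setIntegral_const, volume_real_Ioc_of_le hb, smul_eq_mul, sub_zero]
    _ ≤ ∫ x in Ioc 0 b, ((1 + exp (x ^ 2 - L)) ^ 2)⁻¹ := by
        refine setIntegral_mono_on (integrableOn_const measure_Ioc_lt_top.ne)
          (hint.mono_set Ioc_subset_Ioi_self) measurableSet_Ioc fun x hx => ?_
        have : x ^ 2 ≤ b ^ 2 := pow_le_pow_left₀ hx.1.le hx.2 2
        gcongr
    _ ≤ fermiSqIntegral L :=
        setIntegral_mono_set hint (ae_of_all _ fun x => by positivity)
          Ioc_subset_Ioi_self.eventuallyLE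

lemma integral_Ioi_mul_exp_neg_mul_sq {c : ℝ} (hc : 0 < c) (b : ℝ) :
    ∫ x in Ioi b, x * exp (-c * x ^ 2) = exp (-c * b ^ 2) / (2 * c) := by
  have hderiv (x : ℝ) : HasDerivAt (fun x => -exp (-c * x ^ 2) / (2 * c))
      (x * exp (-c * x ^ 2)) x := by
    refine ((((hasDerivAt_pow 2 x).const_mul (-c)).exp.neg).div_const (2 * c)).congr_deriv ?_
    field_simp
    ring
  have hlim : Tendsto (fun x => -exp (-c * x ^ 2) / (2 * c)) atTop (𝓝 0) := by
    have : Tendsto (fun x : ℝ => -c * x ^ 2) atTop atBot :=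
      (tendsto_pow_atTop two_ne_zero).const_mul_atTop_of_neg (neg_neg_of_pos hc)
    simpa using ((tendsto_exp_atBot.comp this).neg).div_const (2 * c)
  rw [integral_Ioi_of_hasDerivAt_of_tendsto (hderiv b).continuousAt.continuousWithinAt
    (fun x _ => hderiv x) (integrable_mul_exp_neg_mul_sq hc).integrableOn hlim]
  ring

lemma integral_Ioi_exp_neg_mul_sq_le {c b : ℝ} (hc : 0 < c) (hb : 0 < b) :
    ∫ x in Ioi b, exp (-c * x ^ 2) ≤ exp (-c * b ^ 2) / (2 * c * b) := by
  calc ∫ x in Ioi b, exp (-c * x ^ 2) ≤ ∫ x in Ioi b, b⁻¹ * (x * exp (-c * x ^ 2)) := by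
        refine setIntegral_mono_on (integrable_exp_neg_mul_sq hc).integrableOn
          ((integrable_mul_exp_neg_mul_sq hc).const_mul _).integrableOn measurableSet_Ioi
          fun x hx => ?_
        rw [← mul_assoc, le_mul_iff_one_le_left (exp_pos _), le_inv_mul_iff₀ hb, mul_one]
        exact le_of_lt hx
    _ = exp (-c * b ^ 2) / (2 * c * b) := by
        rw [integral_const_mul, integral_Ioi_mul_exp_neg_mul_sq hc]
        field_simp

lemma fermiSqIntegral_le (L : ℝ) {b : ℝ} (hb : 0 < b) :
    fermiSqIntegral L ≤ b + exp (2 * L) * exp (-2 * b ^ 2) / (4 * b) := by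
  have hint := integrable_inv_one_add_exp_sq_sub L
  have hhead : ∫ x in Ioc 0 b, ((1 + exp (x ^ 2 - L)) ^ 2)⁻¹ ≤ b := by
    refine (setIntegral_mono_on hint.integrableOn
      (integrableOn_const (C := (1 : ℝ)) measure_Ioc_lt_top.ne) measurableSet_Ioc
      fun x _ => ?_).trans_eq (by simp [hb.le])
    exact inv_le_one_of_one_le₀ (one_le_pow₀ (by linarith [exp_pos (x ^ 2 - L)]))
  have htail : ∫ x in Ioi b, ((1 + exp (x ^ 2 - L)) ^ 2)⁻¹ ≤
      exp (2 * L) * exp (-2 * b ^ 2) / (4 * b) := by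
    calc ∫ x in Ioi b, ((1 + exp (x ^ 2 - L)) ^ 2)⁻¹
        ≤ ∫ x in Ioi b, exp (2 * L) * exp (-2 * x ^ 2) := by
          refine setIntegral_mono hint.integrableOn
            ((integrable_exp_neg_mul_sq two_pos).const_mul _).integrableOn fun x => ?_
          rw [← exp_add]
          exact (inv_one_add_exp_sq_le_exp _).trans_eq (by ring_nf)
      _ ≤ exp (2 * L) * (exp (-2 * b ^ 2) / (2 * 2 * b)) := by
          rw [integral_const_mul]
          gcongr
          exact integral_Ioi_exp_neg_mul_sq_le two_pos hb
      _ = _ := by ring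
  rw [fermiSqIntegral, ← Ioc_union_Ioi_eq_Ioi hb.le,
    setIntegral_union (Ioc_disjoint_Ioi le_rfl) measurableSet_Ioi hint.integrableOn
      hint.integrableOn]
  exact add_le_add hhead htail

lemma tendsto_fermiSqIntegral_sq_div :
    Tendsto (fun s => fermiSqIntegral (s ^ 2) / s) atTop (𝓝 1) := by
  have hlower :
      Tendsto (fun s : ℝ => (1 - s⁻¹) * ((1 + exp (1 - 2 * s)) ^ 2)⁻¹) atTop (𝓝 1) := by
    have hexp : Tendsto (fun s : ℝ => exp (1 - 2 * s)) atTop (𝓝 0) :=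
      tendsto_exp_atBot.comp <| by
        simp_rw [sub_eq_add_neg]
        exact tendsto_atBot_add_const_left _ 1
          (tendsto_neg_atTop_atBot.comp (tendsto_id.const_mul_atTop two_pos))
    simpa using (tendsto_const_nhds.sub tendsto_inv_atTop_zero).mul
      (((tendsto_const_nhds.add hexp).pow 2).inv₀ (by norm_num : ((1 : ℝ) + 0) ^ 2 ≠ 0))
  have hupper : Tendsto (fun s : ℝ => 1 + 2 * s⁻¹) atTop (𝓝 1) := by
    simpa using tendsto_const_nhds.add (tendsto_inv_atTop_zero.const_mul (2 : ℝ))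
  refine tendsto_of_tendsto_of_tendsto_of_le_of_le' hlower hupper ?_ ?_
  · filter_upwards [eventually_ge_atTop 1] with s hs
    have h := mul_le_fermiSqIntegral (s ^ 2) (b := s - 1) (by linarith)
    rw [show (s - 1) ^ 2 - s ^ 2 = 1 - 2 * s by ring] at h
    rw [le_div_iff₀ (by linarith)]
    calc (1 - s⁻¹) * ((1 + exp (1 - 2 * s)) ^ 2)⁻¹ * s
        = (s - 1) * ((1 + exp (1 - 2 * s)) ^ 2)⁻¹ := by field_simp
      _ ≤ _ := h
  · filter_upwards [eventually_ge_atTop 1] with s hs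
    have h := fermiSqIntegral_le (s ^ 2) (b := s + 1) (by linarith)
    rw [← exp_add, show 2 * s ^ 2 + -2 * (s + 1) ^ 2 = -(4 * s + 2) by ring] at h
    have htail : exp (-(4 * s + 2)) / (4 * (s + 1)) ≤ 1 := by
      rw [div_le_one (by linarith)]
      linarith [exp_le_one_iff.mpr (by linarith : -(4 * s + 2) ≤ 0)]
    rw [div_le_iff₀ (by linarith)]
    calc fermiSqIntegral (s ^ 2) ≤ s + 2 := by linarith
      _ = (1 + 2 * s⁻¹) * s := by field_simp

lemma tendsto_fermiSqIntegral_div_sqrt :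
    Tendsto (fun L => fermiSqIntegral L / √L) atTop (𝓝 1) := by
  refine (tendsto_fermiSqIntegral_sq_div.comp tendsto_sqrt_atTop).congr' ?_
  filter_upwards [eventually_ge_atTop 0] with L hL
  simp only [Function.comp_apply, sq_sqrt hL]

lemma setIntegral_Ioi_eq_fermiSqIntegral {ω : ℝ} (hω : 0 < ω) {lam : ℝ} (hlam : 0 < lam) :
    ∫ x in Ioi 0, ((1 + lam * exp (x ^ 2 * ω ^ 2 / 2)) ^ 2)⁻¹ =
      √2 * ω⁻¹ * fermiSqIntegral (-log lam) := by
  have ha : 0 < ω / √2 := by positivity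
  have hexponent (x : ℝ) :
      lam * exp (x ^ 2 * ω ^ 2 / 2) = exp ((ω / √2 * x) ^ 2 - -log lam) := by
    rw [sub_neg_eq_add, exp_add, exp_log hlam, mul_pow, div_pow, sq_sqrt zero_le_two]
    ring_nf
  simp_rw [hexponent]
  rw [integral_comp_mul_left_Ioi (fun y => ((1 + exp (y ^ 2 - -log lam)) ^ 2)⁻¹) 0 ha,
    mul_zero, smul_eq_mul, fermiSqIntegral, inv_div, div_eq_mul_inv]

/-- As `λ → 0⁺`, `∫_0^∞ (1 + λ e^{x²ω²/2})⁻² dx ∼ √2 ω⁻¹ (−log λ)^{1/2}`. -/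
theorem stmt_8 (ω : ℝ) (hω : 0 < ω) :
    Tendsto (fun lam : ℝ =>
        (∫ x in Set.Ioi (0 : ℝ), ((1 + lam * Real.exp (x ^ 2 * ω ^ 2 / 2)) ^ 2)⁻¹) /
          (Real.sqrt 2 * ω⁻¹ * Real.sqrt (-Real.log lam)))
      (nhdsWithin 0 (Set.Ioi 0)) (nhds 1) := by
  have hlog : Tendsto (fun lam => -log lam) (𝓝[>] 0) atTop :=
    tendsto_neg_atBot_atTop.comp tendsto_log_nhdsGT_zero
  refine (tendsto_fermiSqIntegral_div_sqrt.comp hlog).congr' ?_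
  filter_upwards [self_mem_nhdsWithin] with lam hlam
  rw [Function.comp_apply, setIntegral_Ioi_eq_fermiSqIntegral hω hlam,
    mul_div_mul_left _ _ (by positivity)]
end

section
/- Let ω > 0 and let m ≥ 1 be a real number. Then, as λ → 0⁺, sup_{l ≥ 1} [(1 + λ^{−1} e^{−l²ω²/2})^{−2} (1 + l^{2m})^{−1}] ∼ 2^{−m} ω^{2m} (−log λ)^{−m}; that is, lim_{λ→0⁺} (−log λ)^{m} 2^{m} ω^{−2m} · sup_{l ≥ 1} [(1 + λ^{−1} e^{−l²ω²/2})^{−2} (1 + l^{2m})^{−1}] = 1. -/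
open Real Filter


private lemma sqA (t : ℝ) (ht : 0 < t) : ((2*t)^(1/2:ℝ))^2 = 2*t := by
  rw [← Real.rpow_natCast ((2*t)^(1/2:ℝ)) 2, ← Real.rpow_mul (by positivity)]
  norm_num

private lemma sqB (t : ℝ) (ht : 0 < t) : (t^(1/4:ℝ))^2 = t^(1/2:ℝ) := by
  rw [← Real.rpow_natCast (t^(1/4:ℝ)) 2, ← Real.rpow_mul ht.le]
  norm_num

private lemma mulAB (t : ℝ) (ht : 0 < t) :
    (2*t)^(1/2:ℝ) * t^(1/4:ℝ) = 2^(1/2:ℝ) * t^(3/4:ℝ) := by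
  rw [Real.mul_rpow (by norm_num) ht.le, mul_assoc, ← Real.rpow_add ht]
  norm_num

private lemma sq_div_two_t (t : ℝ) (ht : 0 < t) (u : ℝ) :
    u^2/(2*t) = (u / (2*t)^(1/2:ℝ))^2 := by
  rw [div_pow, sqA t ht]

private lemma div_ratioB (t : ℝ) (ht : 0 < t) :
    t^(1/4:ℝ)/(2*t)^(1/2:ℝ) = 2^(-(1/2):ℝ) * t^(-(1/4):ℝ) := by
  rw [Real.mul_rpow (by norm_num) ht.le,
    show (-(1/4):ℝ) = 1/4 + -(1/2) by norm_num, Real.rpow_add ht,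
    Real.rpow_neg ht.le, Real.rpow_neg (by norm_num : (0:ℝ) ≤ 2)]
  ring

private lemma div_ratioC (t : ℝ) (ht : 0 < t) (ω : ℝ) :
    ω/(2*t)^(1/2:ℝ) = ω * (2^(-(1/2):ℝ) * t^(-(1/2):ℝ)) := by
  rw [Real.mul_rpow (by norm_num) ht.le,
    Real.rpow_neg ht.le, Real.rpow_neg (by norm_num : (0:ℝ) ≤ 2)]
  ring

private lemma expandM (t : ℝ) (ht : 0 < t) :
    ((2*t)^(1/2:ℝ) - t^(1/4:ℝ))^2
      = 2*t - 2*(2^(1/2:ℝ) * t^(3/4:ℝ)) + t^(1/2:ℝ) := by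
  have h : ((2*t)^(1/2:ℝ) - t^(1/4:ℝ))^2
      = ((2*t)^(1/2:ℝ))^2 - 2*((2*t)^(1/2:ℝ) * t^(1/4:ℝ)) + (t^(1/4:ℝ))^2 := by ring
  rw [h, sqA t ht, sqB t ht, mulAB t ht]

private lemma expandP (t : ℝ) (ht : 0 < t) :
    ((2*t)^(1/2:ℝ) + t^(1/4:ℝ))^2
      = 2*t + 2*(2^(1/2:ℝ) * t^(3/4:ℝ)) + t^(1/2:ℝ) := by
  have h : ((2*t)^(1/2:ℝ) + t^(1/4:ℝ))^2
      = ((2*t)^(1/2:ℝ))^2 + 2*((2*t)^(1/2:ℝ) * t^(1/4:ℝ)) + (t^(1/4:ℝ))^2 := by ring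
  rw [h, sqA t ht, sqB t ht, mulAB t ht]

private lemma hlimM :
    Tendsto (fun t : ℝ => ((2*t)^(1/2:ℝ) - t^(1/4:ℝ))^2/(2*t)) atTop (nhds 1) := by
  have h : Tendsto (fun t : ℝ => (1 - 2^(-(1/2):ℝ) * t^(-(1/4):ℝ))^2) atTop (nhds 1) := by
    have h0 : Tendsto (fun t : ℝ => 1 - 2^(-(1/2):ℝ) * t^(-(1/4):ℝ)) atTop (nhds 1) := by
      have := (tendsto_rpow_neg_atTop (by norm_num : (0:ℝ) < 1/4)).const_mul (2^(-(1/2):ℝ))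
      simpa using (tendsto_const_nhds (x := (1:ℝ)) (f := atTop)).sub this
    simpa using h0.pow 2
  refine h.congr' ?_
  filter_upwards [eventually_gt_atTop (0:ℝ)] with t ht
  have hA : (0:ℝ) < (2*t)^(1/2:ℝ) := Real.rpow_pos_of_pos (by linarith) _
  rw [sq_div_two_t t ht, sub_div, div_self hA.ne', div_ratioB t ht]

private lemma hlimP (ω : ℝ) :
    Tendsto (fun t : ℝ => ((2*t)^(1/2:ℝ) + t^(1/4:ℝ) + ω)^2/(2*t)) atTop (nhds 1) := by
  have h : Tendsto (fun t : ℝ =>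
      (1 + 2^(-(1/2):ℝ) * t^(-(1/4):ℝ) + ω * (2^(-(1/2):ℝ) * t^(-(1/2):ℝ)))^2)
      atTop (nhds 1) := by
    have h1 := (tendsto_rpow_neg_atTop (by norm_num : (0:ℝ) < 1/4)).const_mul (2^(-(1/2):ℝ))
    have h2 := ((tendsto_rpow_neg_atTop (by norm_num : (0:ℝ) < 1/2)).const_mul
      (2^(-(1/2):ℝ))).const_mul ω
    have h0 : Tendsto (fun t : ℝ => 1 + 2^(-(1/2):ℝ) * t^(-(1/4):ℝ)
        + ω * (2^(-(1/2):ℝ) * t^(-(1/2):ℝ))) atTop (nhds 1) := by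
      have := ((tendsto_const_nhds (x := (1:ℝ)) (f := atTop)).add h1).add h2
      simpa using this.congr (fun t => by ring)
    simpa using h0.pow 2
  refine h.congr' ?_
  filter_upwards [eventually_gt_atTop (0:ℝ)] with t ht
  have hA : (0:ℝ) < (2*t)^(1/2:ℝ) := Real.rpow_pos_of_pos (by linarith) _
  rw [sq_div_two_t t ht, add_div, add_div, div_self hA.ne', div_ratioB t ht,
    div_ratioC t ht]


private lemma ratioR (ω m : ℝ) (hω : 0 < ω) (hm : 1 ≤ m) (u : ℝ → ℝ)
    (hu : ∀ᶠ t in atTop, 0 ≤ u t)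
    (hlim : Tendsto (fun t => u t ^ 2 / (2 * t)) atTop (nhds 1)) :
    Tendsto (fun t => t ^ m * 2 ^ m * ω ^ (-(2 * m)) * (1 + (u t / ω) ^ (2 * m))⁻¹)
      atTop (nhds 1) := by
  have hm0 : (0:ℝ) < m := lt_of_lt_of_le one_pos hm
  have hlim2 : Tendsto (fun t => (t : ℝ) ^ (-m) * 2 ^ (-m : ℝ) * ω ^ (2 * m) +
      (u t ^ 2 / (2 * t)) ^ m) atTop (nhds 1) := by
    have h1 : Tendsto (fun t : ℝ => t ^ (-m) * 2 ^ (-m : ℝ) * ω ^ (2 * m)) atTop (nhds 0) := by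
      simpa using (tendsto_rpow_neg_atTop hm0).mul_const ((2:ℝ) ^ (-m:ℝ) * ω ^ (2*m)) |>.congr
        (by intro x; ring)
    have h2 : Tendsto (fun t => (u t ^ 2 / (2 * t)) ^ m) atTop (nhds 1) := by
      have := hlim.rpow_const (p := m) (Or.inr hm0.le)
      simpa using this
    simpa using h1.add h2
  have hinv : Tendsto (fun t => ((t:ℝ) ^ (-m) * 2 ^ (-m : ℝ) * ω ^ (2 * m) +
      (u t ^ 2 / (2 * t)) ^ m)⁻¹) atTop (nhds 1) := by
    simpa using hlim2.inv₀ (by norm_num)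
  refine hinv.congr' ?_
  filter_upwards [hu, eventually_gt_atTop (0:ℝ)] with t hut ht
  have hωm : (0:ℝ) < ω ^ (2 * m) := rpow_pos_of_pos hω _
  have htm : (0:ℝ) < t ^ m := rpow_pos_of_pos ht _
  have h2m : (0:ℝ) < (2:ℝ) ^ m := rpow_pos_of_pos two_pos _
  -- key identity
  have hx : (u t / ω) ^ (2 * m) * (t ^ m * 2 ^ m * ω ^ (-(2 * m)))⁻¹
      = (u t ^ 2 / (2 * t)) ^ m := by
    rw [Real.div_rpow hut hω.le, Real.rpow_neg hω.le,
      Real.div_rpow (sq_nonneg (u t)) (by positivity),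
      Real.mul_rpow (by norm_num) ht.le]
    have hu2 : u t ^ (2 * m) = (u t ^ 2) ^ m := by
      rw [← Real.rpow_natCast (u t) 2, ← Real.rpow_mul hut]
      norm_num
    rw [hu2]
    field_simp
  have hP : t ^ m * 2 ^ m * ω ^ (-(2 * m)) ≠ 0 := by positivity
  rw [← hx]
  have hPinv : (t:ℝ) ^ (-m) * 2 ^ (-m : ℝ) * ω ^ (2 * m)
      = (t ^ m * 2 ^ m * ω ^ (-(2 * m)))⁻¹ := by
    rw [Real.rpow_neg ht.le, Real.rpow_neg (by norm_num : (0:ℝ) ≤ 2),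
      Real.rpow_neg hω.le]
    field_simp
  rw [hPinv]
  rw [show (t ^ m * 2 ^ m * ω ^ (-(2 * m)))⁻¹ + (u t / ω) ^ (2 * m) *
      (t ^ m * 2 ^ m * ω ^ (-(2 * m)))⁻¹
      = (1 + (u t / ω) ^ (2 * m)) * (t ^ m * 2 ^ m * ω ^ (-(2 * m)))⁻¹ by ring,
    mul_inv, inv_inv]
  ring

private lemma poly_exp_zero (m : ℝ) :
    Tendsto (fun t : ℝ => t ^ m * Real.exp (-t^(3/4:ℝ))) atTop (nhds 0) := by
  have base := tendsto_rpow_mul_exp_neg_mul_atTop_nhds_zero (4/3*m) 1 one_pos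
  have comp := base.comp (tendsto_rpow_atTop (by norm_num : (0:ℝ) < 3/4))
  refine comp.congr' ?_
  filter_upwards [eventually_ge_atTop (0:ℝ)] with t ht
  have : (t^(3/4:ℝ))^(4/3*m : ℝ) = t ^ m := by
    rw [← Real.rpow_mul ht]
    ring_nf
  simp only [Function.comp, this, neg_mul, one_mul]

private lemma hlimB (ω m : ℝ) (hω : 0 < ω) :
    Tendsto (fun t : ℝ => t^m * 2^m * ω^(-(2*m)) *
      Real.exp (-2*(t - ((2*t)^(1/2:ℝ) - t^(1/4:ℝ))^2/2))) atTop (nhds 0) := by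
  have hg : Tendsto (fun t : ℝ => (2:ℝ)^m * ω^(-(2*m)) *
      (t ^ m * Real.exp (-t^(3/4:ℝ)))) atTop (nhds 0) := by
    simpa using (poly_exp_zero m).const_mul ((2:ℝ)^m * ω^(-(2*m)))
  refine squeeze_zero' ?_ ?_ hg
  · filter_upwards [eventually_ge_atTop (0:ℝ)] with t ht; positivity
  · filter_upwards [eventually_ge_atTop (1:ℝ)] with t ht
    have ht0 : (0:ℝ) < t := lt_of_lt_of_le one_pos ht
    have h12 : (1:ℝ) ≤ 2^(1/2:ℝ) := by
      calc (1:ℝ) = 2^(0:ℝ) := by norm_num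
      _ ≤ 2^(1/2:ℝ) := Real.rpow_le_rpow_of_exponent_le (by norm_num) (by norm_num)
    have hhalf : t^(1/2:ℝ) ≤ t^(3/4:ℝ) :=
      Real.rpow_le_rpow_of_exponent_le ht (by norm_num)
    have ht34 : (0:ℝ) ≤ t^(3/4:ℝ) := Real.rpow_nonneg ht0.le _
    have harg : -2*(t - ((2*t)^(1/2:ℝ) - t^(1/4:ℝ))^2/2) ≤ -t^(3/4:ℝ) := by
      have hE : ((2*t)^(1/2:ℝ) - t^(1/4:ℝ))^2
          = 2*t - 2*(2^(1/2:ℝ) * t^(3/4:ℝ)) + t^(1/2:ℝ) := expandM t ht0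
      rw [hE]
      nlinarith [Real.rpow_nonneg ht0.le (3/4:ℝ)]
    have hexp : Real.exp (-2*(t - ((2*t)^(1/2:ℝ) - t^(1/4:ℝ))^2/2))
        ≤ Real.exp (-t^(3/4:ℝ)) := Real.exp_le_exp.mpr harg
    calc t^m * 2^m * ω^(-(2*m)) * Real.exp (-2*(t - ((2*t)^(1/2:ℝ) - t^(1/4:ℝ))^2/2))
        ≤ t^m * 2^m * ω^(-(2*m)) * Real.exp (-t^(3/4:ℝ)) := by
          apply mul_le_mul_of_nonneg_left hexp; positivity
      _ = 2^m * ω^(-(2*m)) * (t ^ m * Real.exp (-t^(3/4:ℝ))) := by ring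

set_option maxHeartbeats 1000000 in
private lemma key (ω m : ℝ) (hω : 0 < ω) (hm : 1 ≤ m) :
    Tendsto (fun t : ℝ => t ^ m * 2 ^ m * ω ^ (-(2 * m)) *
        ⨆ l : {l : ℕ // 1 ≤ l},
          ((1 + Real.exp t * Real.exp (-((l : ℕ) : ℝ) ^ 2 * ω ^ 2 / 2)) ^ 2)⁻¹ *
            (1 + (((l : ℕ) : ℝ)) ^ (2 * m))⁻¹) atTop (nhds 1) := by
  haveI : Nonempty {l : ℕ // 1 ≤ l} := ⟨⟨1, le_rfl⟩⟩
  have hm2 : (0:ℝ) ≤ 2 * m := by linarith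
  -- notation
  set uM : ℝ → ℝ := fun t => (2*t)^(1/2:ℝ) - t^(1/4:ℝ) with huM
  set uP : ℝ → ℝ := fun t => (2*t)^(1/2:ℝ) + t^(1/4:ℝ) + ω with huP
  set P : ℝ → ℝ := fun t => t ^ m * 2 ^ m * ω ^ (-(2 * m)) with hP
  have huMnn : ∀ t : ℝ, 1 ≤ t → 0 ≤ uM t := by
    intro t ht
    have ht0 : (0:ℝ) < t := lt_of_lt_of_le one_pos ht
    have h1 : t^(1/4:ℝ) ≤ t^(1/2:ℝ) := Real.rpow_le_rpow_of_exponent_le ht (by norm_num)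
    have h2 : t^(1/2:ℝ) ≤ (2*t)^(1/2:ℝ) :=
      Real.rpow_le_rpow ht0.le (by linarith) (by norm_num)
    simp only [huM]; linarith
  -- limits of bounding functions
  have hloLim : Tendsto (fun t => (P t * (1 + (uP t / ω) ^ (2 * m))⁻¹) *
      ((1 + Real.exp (-(2^(1/2:ℝ) * t^(3/4:ℝ))))^2)⁻¹) atTop (nhds 1) := by
    have h1 := ratioR ω m hω hm uP (by
      filter_upwards [eventually_ge_atTop (1:ℝ)] with t ht
      have ht0 : (0:ℝ) < t := lt_of_lt_of_le one_pos ht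
      have := Real.rpow_nonneg (by linarith : (0:ℝ) ≤ 2*t) (1/2:ℝ)
      have := Real.rpow_nonneg ht0.le (1/4:ℝ)
      simp only [huP]; linarith) (hlimP ω)
    have h2 : Tendsto (fun t : ℝ => ((1 + Real.exp (-(2^(1/2:ℝ) * t^(3/4:ℝ))))^2)⁻¹)
        atTop (nhds 1) := by
      have hc : Tendsto (fun t : ℝ => 2^(1/2:ℝ) * t^(3/4:ℝ)) atTop atTop := by
        exact (tendsto_rpow_atTop (by norm_num : (0:ℝ) < 3/4)).const_mul_atTop
          (Real.rpow_pos_of_pos two_pos _)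
      have he : Tendsto (fun t : ℝ => Real.exp (-(2^(1/2:ℝ) * t^(3/4:ℝ)))) atTop (nhds 0) :=
        Real.tendsto_exp_neg_atTop_nhds_zero.comp hc
      have := (((tendsto_const_nhds (x := (1:ℝ)) (f := atTop)).add he).pow 2).inv₀ (by norm_num)
      simpa using this
    simpa using h1.mul h2
  have hhiLim : Tendsto (fun t => max (P t * (1 + (uM t / ω) ^ (2 * m))⁻¹)
      (P t * Real.exp (-2*(t - (uM t)^2/2)))) atTop (nhds 1) := by
    have h1 := ratioR ω m hω hm uM (by
      filter_upwards [eventually_ge_atTop (1:ℝ)] with t ht; exact huMnn t ht) hlimM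
    have h2 := hlimB ω m hω
    have hmax := h1.max h2
    rw [show max (1:ℝ) 0 = 1 from max_eq_left zero_le_one] at hmax
    exact hmax
  refine tendsto_of_tendsto_of_tendsto_of_le_of_le' hloLim hhiLim ?_ ?_
  · -- lower bound
    filter_upwards [eventually_ge_atTop (1:ℝ)] with t ht
    have ht0 : (0:ℝ) < t := lt_of_lt_of_le one_pos ht
    have hPpos : 0 < P t := by simp only [hP]; positivity
    set lp : ℕ := ⌈((2*t)^(1/2:ℝ) + t^(1/4:ℝ))/ω⌉₊ with hlp
    have harg_pos : 0 < ((2*t)^(1/2:ℝ) + t^(1/4:ℝ))/ω := by positivity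
    have hlp1 : 1 ≤ lp := Nat.one_le_ceil_iff.mpr harg_pos
    set c : ℝ := (lp : ℝ) with hc
    have hc_lb : ((2*t)^(1/2:ℝ) + t^(1/4:ℝ))/ω ≤ c := Nat.le_ceil _
    have hc_ub : c ≤ uP t / ω := by
      have h := (Nat.ceil_lt_add_one harg_pos.le).le
      have : uP t / ω = ((2*t)^(1/2:ℝ) + t^(1/4:ℝ))/ω + 1 := by
        simp only [huP]; field_simp
      rw [this]; exact h
    have hc0 : (0:ℝ) ≤ c := by positivity
    -- bound the exponential factor at lp
    have hcω : (2*t)^(1/2:ℝ) + t^(1/4:ℝ) ≤ c * ω := (div_le_iff₀ hω).mp hc_lb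
    have hsq : ((2*t)^(1/2:ℝ) + t^(1/4:ℝ))^2 ≤ c^2 * ω^2 := by
      have h0 : (0:ℝ) ≤ (2*t)^(1/2:ℝ) + t^(1/4:ℝ) := by positivity
      nlinarith
    have hδ : t - c^2 * ω^2/2 ≤ -(2^(1/2:ℝ) * t^(3/4:ℝ)) := by
      have hE := expandP t ht0
      have h12 : (0:ℝ) ≤ t^(1/2:ℝ) := Real.rpow_nonneg ht0.le _
      nlinarith
    have hexp_eq : Real.exp t * Real.exp (-c ^ 2 * ω ^ 2 / 2)
        = Real.exp (t - c^2 * ω^2/2) := by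
      rw [← Real.exp_add]; ring_nf
    have hexp_le : Real.exp t * Real.exp (-c ^ 2 * ω ^ 2 / 2)
        ≤ Real.exp (-(2^(1/2:ℝ) * t^(3/4:ℝ))) := by
      rw [hexp_eq]; exact Real.exp_le_exp.mpr hδ
    -- the term at lp dominates the lower bound
    have hterm : ((1 + Real.exp (-(2^(1/2:ℝ) * t^(3/4:ℝ))))^2)⁻¹ *
          (1 + (uP t / ω) ^ (2 * m))⁻¹
        ≤ ((1 + Real.exp t * Real.exp (-c ^ 2 * ω ^ 2 / 2)) ^ 2)⁻¹ *
          (1 + c ^ (2 * m))⁻¹ := by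
      have hEpos : (0:ℝ) ≤ Real.exp t * Real.exp (-c ^ 2 * ω ^ 2 / 2) := by positivity
      gcongr
    have hsup : ((1 + Real.exp t * Real.exp (-c ^ 2 * ω ^ 2 / 2)) ^ 2)⁻¹ *
          (1 + c ^ (2 * m))⁻¹
        ≤ ⨆ l : {l : ℕ // 1 ≤ l},
          ((1 + Real.exp t * Real.exp (-((l : ℕ) : ℝ) ^ 2 * ω ^ 2 / 2)) ^ 2)⁻¹ *
            (1 + (((l : ℕ) : ℝ)) ^ (2 * m))⁻¹ := by
      have hbdd : BddAbove (Set.range fun l : {l : ℕ // 1 ≤ l} =>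
          ((1 + Real.exp t * Real.exp (-((l : ℕ) : ℝ) ^ 2 * ω ^ 2 / 2)) ^ 2)⁻¹ *
            (1 + (((l : ℕ) : ℝ)) ^ (2 * m))⁻¹) := by
        refine ⟨1, ?_⟩
        rintro x ⟨l, rfl⟩
        have h1 : ((1 + Real.exp t * Real.exp (-((l : ℕ) : ℝ) ^ 2 * ω ^ 2 / 2)) ^ 2)⁻¹ ≤ 1 := by
          rw [inv_le_one_iff₀]
          right
          nlinarith [mul_pos (Real.exp_pos t) (Real.exp_pos (-((l : ℕ) : ℝ) ^ 2 * ω ^ 2 / 2))]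
        have h2 : (1 + (((l : ℕ) : ℝ)) ^ (2 * m))⁻¹ ≤ 1 := by
          rw [inv_le_one_iff₀]
          right
          nlinarith [Real.rpow_nonneg (Nat.cast_nonneg (l:ℕ)) (2*m)]
        have h2nn : (0:ℝ) ≤ (1 + (((l : ℕ) : ℝ)) ^ (2 * m))⁻¹ := by
          have := Real.rpow_nonneg (Nat.cast_nonneg (l:ℕ)) (2*m); positivity
        calc _ ≤ 1 * (1 + (((l : ℕ) : ℝ)) ^ (2 * m))⁻¹ := by
              exact mul_le_mul_of_nonneg_right h1 h2nn
          _ ≤ 1 := by simpa using h2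
      exact le_ciSup hbdd ⟨lp, hlp1⟩
    calc P t * (1 + (uP t / ω) ^ (2 * m))⁻¹ *
          ((1 + Real.exp (-(2^(1/2:ℝ) * t^(3/4:ℝ))))^2)⁻¹
        = P t * (((1 + Real.exp (-(2^(1/2:ℝ) * t^(3/4:ℝ))))^2)⁻¹ *
            (1 + (uP t / ω) ^ (2 * m))⁻¹) := by ring
      _ ≤ P t * (((1 + Real.exp t * Real.exp (-c ^ 2 * ω ^ 2 / 2)) ^ 2)⁻¹ *
            (1 + c ^ (2 * m))⁻¹) := by
          exact mul_le_mul_of_nonneg_left hterm hPpos.le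
      _ ≤ _ := mul_le_mul_of_nonneg_left hsup hPpos.le
  · -- upper bound
    filter_upwards [eventually_ge_atTop (1:ℝ)] with t ht
    have ht0 : (0:ℝ) < t := lt_of_lt_of_le one_pos ht
    have hPpos : 0 < P t := by simp only [hP]; positivity
    have huM0 : 0 ≤ uM t := huMnn t ht
    have hSbound : (⨆ l : {l : ℕ // 1 ≤ l},
          ((1 + Real.exp t * Real.exp (-((l : ℕ) : ℝ) ^ 2 * ω ^ 2 / 2)) ^ 2)⁻¹ *
            (1 + (((l : ℕ) : ℝ)) ^ (2 * m))⁻¹)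
        ≤ max ((1 + (uM t / ω) ^ (2 * m))⁻¹) (Real.exp (-2*(t - (uM t)^2/2))) := by
      refine ciSup_le ?_
      rintro ⟨l, hl⟩
      set c : ℝ := ((l : ℕ) : ℝ) with hcdef
      have hc0 : (0:ℝ) ≤ c := Nat.cast_nonneg _
      set E : ℝ := Real.exp t * Real.exp (-c ^ 2 * ω ^ 2 / 2) with hE
      have hEpos : 0 < E := by positivity
      have hf2nn : (0:ℝ) ≤ (1 + c ^ (2 * m))⁻¹ := by
        have := Real.rpow_nonneg hc0 (2*m); positivity
      rcases le_or_gt (uM t / ω) c with hcase | hcase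
      · refine le_trans ?_ (le_max_left _ _)
        have h1 : ((1 + E) ^ 2)⁻¹ ≤ 1 := by
          rw [inv_le_one_iff₀]; right; nlinarith
        calc ((1 + E) ^ 2)⁻¹ * (1 + c ^ (2 * m))⁻¹
            ≤ 1 * (1 + c ^ (2 * m))⁻¹ := mul_le_mul_of_nonneg_right h1 hf2nn
          _ = (1 + c ^ (2 * m))⁻¹ := one_mul _
          _ ≤ (1 + (uM t / ω) ^ (2 * m))⁻¹ := by
              gcongr
      · refine le_trans ?_ (le_max_right _ _)
        have hcω : c * ω ≤ uM t := ((lt_div_iff₀ hω).mp hcase).le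
        have hsq : c^2 * ω^2 ≤ (uM t)^2 := by nlinarith [mul_nonneg hc0 hω.le]
        have hδ : t - (uM t)^2/2 ≤ t - c^2*ω^2/2 := by gcongr t - ?_/2
        have hf1 : ((1 + E) ^ 2)⁻¹ ≤ Real.exp (-2*(t - c^2*ω^2/2)) := by
          have hEeq : E = Real.exp (t - c^2*ω^2/2) := by
            rw [hE, ← Real.exp_add]; ring_nf
          have hsq2 : Real.exp (t - c^2*ω^2/2)^2 ≤ (1 + E)^2 := by nlinarith
          have hpos : (0:ℝ) < Real.exp (t - c^2*ω^2/2)^2 := by positivity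
          have := inv_anti₀ hpos hsq2
          refine le_trans this ?_
          rw [← Real.exp_nat_mul]
          rw [← Real.exp_neg]
          apply Real.exp_le_exp.mpr
          push_cast; ring_nf
          exact le_rfl
        calc ((1 + E) ^ 2)⁻¹ * (1 + c ^ (2 * m))⁻¹
            ≤ ((1 + E) ^ 2)⁻¹ * 1 := by
              apply mul_le_mul_of_nonneg_left _ (by positivity)
              rw [inv_le_one_iff₀]; right
              nlinarith [Real.rpow_nonneg hc0 (2*m)]
          _ = ((1 + E) ^ 2)⁻¹ := mul_one _
          _ ≤ Real.exp (-2*(t - c^2*ω^2/2)) := hf1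
          _ ≤ Real.exp (-2*(t - (uM t)^2/2)) := by
              apply Real.exp_le_exp.mpr; linarith
    calc P t * (⨆ l : {l : ℕ // 1 ≤ l},
          ((1 + Real.exp t * Real.exp (-((l : ℕ) : ℝ) ^ 2 * ω ^ 2 / 2)) ^ 2)⁻¹ *
            (1 + (((l : ℕ) : ℝ)) ^ (2 * m))⁻¹)
        ≤ P t * max ((1 + (uM t / ω) ^ (2 * m))⁻¹) (Real.exp (-2*(t - (uM t)^2/2))) :=
          mul_le_mul_of_nonneg_left hSbound hPpos.le
      _ = max (P t * (1 + (uM t / ω) ^ (2 * m))⁻¹)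
          (P t * Real.exp (-2*(t - (uM t)^2/2))) := by
          rw [mul_max_of_nonneg _ _ hPpos.le]

/-- As `λ → 0⁺`, the maximal weighted squared-bias factor over the Sobolev ellipsoid
satisfies `sup_{l ≥ 1} (1 + λ⁻¹ e^{−l²ω²/2})⁻² (1 + l^{2m})⁻¹ ∼ 2^{−m} ω^{2m} (−log λ)^{−m}`. -/
theorem stmt_9 (ω m : ℝ) (hω : 0 < ω) (hm : 1 ≤ m) :
    Tendsto (fun lam : ℝ =>
        (-Real.log lam) ^ m * 2 ^ m * ω ^ (-(2 * m)) *
          ⨆ l : {l : ℕ // 1 ≤ l},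
            ((1 + lam⁻¹ * Real.exp (-((l : ℕ) : ℝ) ^ 2 * ω ^ 2 / 2)) ^ 2)⁻¹ *
              (1 + (((l : ℕ) : ℝ)) ^ (2 * m))⁻¹)
      (nhdsWithin 0 (Set.Ioi 0)) (nhds 1) := by
  have hL : Tendsto (fun lam : ℝ => -Real.log lam) (nhdsWithin 0 (Set.Ioi 0)) atTop :=
    tendsto_neg_atBot_atTop.comp Real.tendsto_log_nhdsGT_zero
  have hcomp := (key ω m hω hm).comp hL
  refine hcomp.congr' ?_
  filter_upwards [self_mem_nhdsWithin] with lam (hlam : 0 < lam)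
  have hinv : Real.exp (-Real.log lam) = lam⁻¹ := by
    rw [Real.exp_neg, Real.exp_log hlam]
  simp only [Function.comp, hinv]
end

section
/- Let ω > 0 and m ≥ 1, and for λ > 0 define B_λ : [0, ∞) → ℝ by B_λ(x) = (1 + λ^{−1} e^{−x²ω²/2})² (1 + x^{2m}). If for each λ ∈ (0, 1), x₀(λ) is a global minimizer of B_λ on [0, ∞), then lim_{λ→0⁺} x₀(λ)² ω² / (2(−log λ)) = 1; equivalently, x₀(λ)²ω²/2 ∼ −log λ as λ → 0⁺. -/
open Real Filter Topology

/-! With `L = -log λ` and `y = x²ω²/2` the function becomes `(1 + e^{L-y})² (1 + (2y/ω²)^m)`.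
At the comparison point `y = L + log L` it is at most `k(L)^m`, where
`k(L) = (1 + 1/L)^{2/m} (1 + 2(L + log L)/ω²) ∼ 2L/ω²`. For a minimizer the first factor then
gives `e^{2(L-y)} ≤ k(L)^m`, i.e. `y ≥ L - O(log L)`, and the second gives `2y/ω² ≤ k(L)`,
i.e. `y ≤ (1 + o(1)) L`. -/

lemma tendsto_log_div_self_atTop : Tendsto (fun L : ℝ => log L / L) atTop (𝓝 0) := by
  simpa using tendsto_pow_log_div_mul_add_atTop 1 0 1 one_ne_zero

noncomputable def profile (ω m L y : ℝ) : ℝ :=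
  (1 + exp (L - y)) ^ 2 * (1 + (2 * y / ω ^ 2) ^ m)

noncomputable def comparisonBound (ω m L : ℝ) : ℝ :=
  (1 + L⁻¹) ^ (2 / m) * (1 + 2 * (L + log L) / ω ^ 2)

section

variable {ω m L y k : ℝ}

lemma eq_profile_neg_log (hω : ω ≠ 0) {lam x : ℝ} (hlam : 0 < lam) (hx : 0 ≤ x) :
    (1 + lam⁻¹ * exp (-x ^ 2 * ω ^ 2 / 2)) ^ 2 * (1 + x ^ (2 * m)) =
      profile ω m (-log lam) (x ^ 2 * ω ^ 2 / 2) := by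
  have hexp : lam⁻¹ * exp (-x ^ 2 * ω ^ 2 / 2) = exp (-log lam - x ^ 2 * ω ^ 2 / 2) := by
    rw [sub_eq_add_neg, exp_add, exp_neg, exp_log hlam]
    ring_nf
  have hpow : x ^ (2 * m) = (2 * (x ^ 2 * ω ^ 2 / 2) / ω ^ 2) ^ m := by
    rw [rpow_mul hx, rpow_two]
    field_simp
  rw [profile, hexp, hpow]

lemma comparisonBound_pos (hL : 1 ≤ L) : 0 < comparisonBound ω m L := by
  have := log_nonneg hL
  unfold comparisonBound
  positivity

lemma profile_le_comparisonBound_rpow (hm : 1 ≤ m) (hL : 1 ≤ L) :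
    profile ω m L (L + log L) ≤ comparisonBound ω m L ^ m := by
  have hlog := log_nonneg hL
  have hexp : exp (L - (L + log L)) = L⁻¹ := by
    rw [sub_add_cancel_left, exp_neg, exp_log (by linarith)]
  have hpow : ((1 + L⁻¹) ^ (2 / m)) ^ m = (1 + L⁻¹) ^ 2 := by
    rw [← rpow_mul (by positivity), div_mul_cancel₀ _ (by linarith), rpow_two]
  have hsuper : 1 + (2 * (L + log L) / ω ^ 2) ^ m ≤ (1 + 2 * (L + log L) / ω ^ 2) ^ m := by
    simpa using add_rpow_le_rpow_add zero_le_one (by positivity) hm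
  rw [profile, comparisonBound, mul_rpow (by positivity) (by positivity), hpow, hexp]
  gcongr

lemma two_mul_sub_le_mul_log (hy : 0 ≤ y) (hk : 0 < k) (h : profile ω m L y ≤ k ^ m) :
    2 * (L - y) ≤ m * log k := by
  have hexp : exp (2 * (L - y)) ≤ k ^ m :=
    calc exp (2 * (L - y)) = exp (L - y) ^ 2 := by rw [← exp_nat_mul]; norm_num
      _ ≤ (1 + exp (L - y)) ^ 2 * 1 := by
          rw [mul_one]; gcongr; linarith
      _ ≤ profile ω m L y := by
          unfold profile
          gcongr
          linarith [rpow_nonneg (by positivity : 0 ≤ 2 * y / ω ^ 2) m]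
      _ ≤ k ^ m := h
  rw [← log_rpow hk, ← log_exp (2 * (L - y))]
  exact log_le_log (exp_pos _) hexp

lemma two_mul_div_le_of_profile_le (hm : 0 < m) (hy : 0 ≤ y) (hk : 0 ≤ k)
    (h : profile ω m L y ≤ k ^ m) : 2 * y / ω ^ 2 ≤ k := by
  have hz : 0 ≤ 2 * y / ω ^ 2 := by positivity
  refine (rpow_le_rpow_iff hz hk hm).1 (le_trans ?_ h)
  unfold profile
  nlinarith [rpow_nonneg hz m, sq_nonneg (exp (L - y)), exp_pos (L - y)]

end

section

variable {ω m : ℝ}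

lemma tendsto_comparisonBound_div (hω : ω ≠ 0) :
    Tendsto (fun L => comparisonBound ω m L / L) atTop (𝓝 (2 / ω ^ 2)) := by
  have hfactor : Tendsto (fun L : ℝ => (1 + L⁻¹) ^ (2 / m)) atTop (𝓝 1) := by
    simpa using ((tendsto_inv_atTop_zero.const_add 1).rpow_const (p := 2 / m) (by simp))
  have hlinear : Tendsto (fun L : ℝ => L⁻¹ + 2 / ω ^ 2 + 2 / ω ^ 2 * (log L / L)) atTop
      (𝓝 (2 / ω ^ 2)) := by
    simpa using (tendsto_inv_atTop_zero.add_const (2 / ω ^ 2)).add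
      (tendsto_log_div_self_atTop.const_mul (2 / ω ^ 2))
  have hprod := hfactor.mul hlinear
  rw [one_mul] at hprod
  refine hprod.congr' ?_
  filter_upwards [eventually_gt_atTop 0] with L hL
  simp only [comparisonBound]
  field_simp
  ring

lemma tendsto_log_comparisonBound_div (hω : ω ≠ 0) :
    Tendsto (fun L => log (comparisonBound ω m L) / L) atTop (𝓝 0) := by
  have hratio : Tendsto (fun L => log (comparisonBound ω m L / L) * L⁻¹) atTop (𝓝 0) := by
    simpa using
      ((tendsto_comparisonBound_div hω).log (by positivity)).mul tendsto_inv_atTop_zero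
  have hsum := hratio.add tendsto_log_div_self_atTop
  rw [add_zero] at hsum
  refine hsum.congr' ?_
  filter_upwards [eventually_ge_atTop 1] with L hL
  rw [log_div (comparisonBound_pos hL).ne' (by positivity)]
  ring

lemma tendsto_div_of_profile_le (hω : ω ≠ 0) (hm : 1 ≤ m) {α : Type*} {l : Filter α}
    {L y : α → ℝ} (hL : Tendsto L l atTop)
    (hy : ∀ᶠ a in l, 0 ≤ y a ∧ profile ω m (L a) (y a) ≤ profile ω m (L a) (L a + log (L a))) :
    Tendsto (fun a => y a / L a) l (𝓝 1) := by
  have hlower :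
      Tendsto (fun a => 1 - m / 2 * (log (comparisonBound ω m (L a)) / L a)) l (𝓝 1) := by
    simpa using (((tendsto_log_comparisonBound_div hω).comp hL).const_mul (m / 2)).const_sub 1
  have hupper : Tendsto (fun a => ω ^ 2 / 2 * (comparisonBound ω m (L a) / L a)) l (𝓝 1) := by
    have := ((tendsto_comparisonBound_div (m := m) hω).comp hL).const_mul (ω ^ 2 / 2)
    rwa [show ω ^ 2 / 2 * (2 / ω ^ 2) = 1 by field_simp] at this
  have hbounds : ∀ᶠ a in l, 2 * (L a - y a) ≤ m * log (comparisonBound ω m (L a)) ∧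
      2 * y a / ω ^ 2 ≤ comparisonBound ω m (L a) ∧ 1 ≤ L a := by
    filter_upwards [hy, hL.eventually_ge_atTop 1] with a ⟨hy0, hya⟩ hLa
    have hk := comparisonBound_pos (ω := ω) (m := m) hLa
    have hyk := hya.trans (profile_le_comparisonBound_rpow hm hLa)
    exact ⟨two_mul_sub_le_mul_log hy0 hk hyk,
      two_mul_div_le_of_profile_le (by linarith) hy0 hk.le hyk, hLa⟩
  refine tendsto_of_tendsto_of_tendsto_of_le_of_le' hlower hupper ?_ ?_
  · filter_upwards [hbounds] with a ⟨hsub, _, hLa⟩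
    calc 1 - m / 2 * (log (comparisonBound ω m (L a)) / L a)
        = (L a - m / 2 * log (comparisonBound ω m (L a))) / L a := by field_simp
      _ ≤ y a / L a := by gcongr; linarith
  · filter_upwards [hbounds] with a ⟨_, hdiv, hLa⟩
    rw [div_le_iff₀ (by positivity)] at hdiv
    calc y a / L a ≤ (ω ^ 2 / 2 * comparisonBound ω m (L a)) / L a := by
          gcongr; linarith
      _ = ω ^ 2 / 2 * (comparisonBound ω m (L a) / L a) := mul_div_assoc _ _ _

end

/-- If `x₀(λ)` is a global minimizer over `[0,∞)` of
`B_λ(x) = (1 + λ⁻¹ e^{−x²ω²/2})² (1 + x^{2m})` for each `λ ∈ (0,1)`, then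
`x₀(λ)² ω² / 2 ∼ −log λ` as `λ → 0⁺`. -/
theorem stmt_11 (ω m : ℝ) (hω : 0 < ω) (hm : 1 ≤ m)
    (B : ℝ → ℝ → ℝ)
    (hB : ∀ lam x, B lam x =
      (1 + lam⁻¹ * Real.exp (-x ^ 2 * ω ^ 2 / 2)) ^ 2 * (1 + x ^ (2 * m)))
    (x₀ : ℝ → ℝ)
    (hx₀ : ∀ lam ∈ Set.Ioo (0 : ℝ) 1, x₀ lam ∈ Set.Ici (0 : ℝ) ∧
      ∀ x ∈ Set.Ici (0 : ℝ), B lam (x₀ lam) ≤ B lam x) :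
    Tendsto (fun lam : ℝ => (x₀ lam) ^ 2 * ω ^ 2 / (2 * (-Real.log lam)))
      (nhdsWithin 0 (Set.Ioi 0)) (nhds 1) := by
  have hL : Tendsto (fun lam : ℝ => -log lam) (𝓝[>] 0) atTop :=
    tendsto_neg_atBot_atTop.comp tendsto_log_nhdsGT_zero
  have hω0 : ω ≠ 0 := hω.ne'
  refine (tendsto_div_of_profile_le (y := fun lam => x₀ lam ^ 2 * ω ^ 2 / 2) hω0 hm hL ?_).congr
    fun lam => by ring
  filter_upwards [Ioo_mem_nhdsGT one_pos, hL.eventually_ge_atTop 1] with lam hlam hL1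
  obtain ⟨hx₀nonneg, hmin⟩ := hx₀ lam hlam
  set L := -log lam
  have hy : 0 ≤ 2 * (L + log L) / ω ^ 2 := by have := log_nonneg hL1; positivity
  have hcomp := hmin _ (sqrt_nonneg (2 * (L + log L) / ω ^ 2))
  rw [hB, hB, eq_profile_neg_log hω0 hlam.1 hx₀nonneg,
    eq_profile_neg_log hω0 hlam.1 (sqrt_nonneg _), sq_sqrt hy,
    div_mul_cancel₀ _ (pow_ne_zero 2 hω0), mul_div_cancel_left₀ _ two_ne_zero] at hcomp
  exact ⟨by positivity, hcomp⟩
end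

section
/- Let ω > 0 and m ≥ 1, and for λ > 0 define B_λ : [0, ∞) → ℝ by B_λ(x) = (1 + λ^{−1} e^{−x²ω²/2})² (1 + x^{2m}). If for each λ ∈ (0, 1), x₀(λ) is a global minimizer of B_λ on [0, ∞), then lim_{λ→0⁺} B_λ(x₀(λ)) / x₀(λ)^{2m} = 1; that is, the minimum value of B_λ is asymptotically equivalent to x₀(λ)^{2m} as λ → 0⁺. -/
/-!
Write `u = λ⁻¹ e^{-x²ω²/2}`, so that `B_λ(x) = (1 + u)² (1 + x^{2m})`.
At `x = √(2 log λ⁻¹) / ω` the Gaussian term equals `1`, so the minimum of `B_λ` is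
`O((log λ⁻¹)^m) = o(λ⁻²)`; since `B_λ(x) ≥ λ⁻² e^{-x²ω²}`, this forces `x₀(λ) → ∞`.
Moving from `x₀` to `√(x₀² + 1)` multiplies the Gaussian term by `q = e^{-ω²/2} < 1` and the
polynomial factor by at most `(1 + x₀⁻²)^m → 1`, so minimality gives
`1 + u ≤ (1 + q u) (1 + x₀⁻²)^{m/2}`, whence `u → 0` at the minimizer.
Then `B_λ(x₀) / x₀^{2m} = (1 + u)² (1 + x₀^{-2m}) → 1`.
-/

open Real Filter Topology Set

theorem tendsto_rpow_mul_log_inv_rpow_nhdsGT_zero {r : ℝ} (hr : 0 < r) (s : ℝ) :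
    Tendsto (fun x => x ^ r * (log x⁻¹) ^ s) (𝓝[>] 0) (𝓝 0) := by
  have hlog : Tendsto (fun x : ℝ => log x⁻¹) (𝓝[>] 0) atTop := by
    simpa only [log_inv, Function.comp_def] using
      tendsto_neg_atBot_atTop.comp tendsto_log_nhdsGT_zero
  refine ((tendsto_rpow_mul_exp_neg_mul_atTop_nhds_zero s r hr).comp hlog).congr' ?_
  filter_upwards [self_mem_nhdsWithin] with x (hx : 0 < x)
  rw [Function.comp_apply, rpow_def_of_pos hx, log_inv, mul_comm]
  ring_nf

theorem rpow_two_mul {x : ℝ} (hx : 0 ≤ x) (m : ℝ) : x ^ (2 * m) = (x ^ 2) ^ m := by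
  rw [rpow_mul hx, rpow_two]

theorem sqrt_rpow_two_mul {t : ℝ} (ht : 0 ≤ t) (m : ℝ) : √t ^ (2 * m) = t ^ m := by
  rw [rpow_two_mul (sqrt_nonneg t), sq_sqrt ht]

theorem tendsto_zero_of_one_add_le_mul {α : Type*} {l : Filter α} {u s : α → ℝ} {q : ℝ}
    (hq : q < 1) (hs : Tendsto s l (𝓝 1)) (hu : ∀ᶠ a in l, 0 ≤ u a)
    (hle : ∀ᶠ a in l, 1 + u a ≤ (1 + q * u a) * s a) : Tendsto u l (𝓝 0) := by
  have hqs : Tendsto (fun a => 1 - q * s a) l (𝓝 (1 - q)) := by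
    simpa using (hs.const_mul q).const_sub 1
  have hbound : Tendsto (fun a => (s a - 1) / (1 - q * s a)) l (𝓝 0) := by
    have := (hs.sub_const 1).div hqs (sub_ne_zero.2 hq.ne')
    rwa [sub_self, zero_div] at this
  refine tendsto_of_tendsto_of_tendsto_of_le_of_le' tendsto_const_nhds hbound hu ?_
  filter_upwards [hle, hqs.eventually_const_lt (sub_pos.2 hq)] with a ha hpos
  rw [le_div_iff₀ hpos]
  linarith

noncomputable def gaussWeight (ω lam x : ℝ) : ℝ := lam⁻¹ * exp (-x ^ 2 * ω ^ 2 / 2)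

noncomputable def barrier (ω m lam x : ℝ) : ℝ := (1 + gaussWeight ω lam x) ^ 2 * (1 + x ^ (2 * m))

section Barrier

variable {ω m lam x : ℝ}

theorem gaussWeight_nonneg (hlam : 0 ≤ lam) : 0 ≤ gaussWeight ω lam x := by
  unfold gaussWeight; positivity

theorem gaussWeight_sqrt_sq_add_one :
    gaussWeight ω lam √(x ^ 2 + 1) = exp (-(ω ^ 2 / 2)) * gaussWeight ω lam x := by
  rw [gaussWeight, gaussWeight, sq_sqrt (by positivity), mul_left_comm, ← exp_add]
  ring_nf

theorem gaussWeight_sqrt_log (hω : ω ≠ 0) (hlam₀ : 0 < lam) (hlam₁ : lam ≤ 1) :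
    gaussWeight ω lam √(2 * log lam⁻¹ / ω ^ 2) = 1 := by
  have hlog : 0 ≤ log lam⁻¹ := log_nonneg (one_le_inv₀ hlam₀ |>.2 hlam₁)
  rw [gaussWeight, sq_sqrt (by positivity),
    show -(2 * log lam⁻¹ / ω ^ 2) * ω ^ 2 / 2 = -log lam⁻¹ by field_simp, exp_neg,
    exp_log (inv_pos.2 hlam₀), inv_inv, inv_mul_cancel₀ hlam₀.ne']

theorem exp_neg_sq_mul_le_sq_mul_barrier (hlam : 0 < lam) (hx : 0 ≤ x) :
    exp (-(x ^ 2 * ω ^ 2)) ≤ lam ^ 2 * barrier ω m lam x := by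
  have hw : lam ^ 2 * gaussWeight ω lam x ^ 2 = exp (-(x ^ 2 * ω ^ 2)) := by
    rw [gaussWeight, ← mul_pow, ← mul_assoc, mul_inv_cancel₀ hlam.ne', one_mul, ← exp_nat_mul]
    ring_nf
  rw [← hw, barrier]
  have hw0 := gaussWeight_nonneg (ω := ω) (x := x) hlam.le
  have hx0 : 0 ≤ x ^ (2 * m) := rpow_nonneg hx _
  gcongr
  nlinarith

theorem barrier_sqrt_log (hω : ω ≠ 0) (hlam₀ : 0 < lam) (hlam₁ : lam ≤ 1) :
    barrier ω m lam √(2 * log lam⁻¹ / ω ^ 2) = 4 * (1 + (2 * log lam⁻¹ / ω ^ 2) ^ m) := by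
  have hlog : 0 ≤ log lam⁻¹ := log_nonneg (one_le_inv₀ hlam₀ |>.2 hlam₁)
  rw [barrier, gaussWeight_sqrt_log hω hlam₀ hlam₁, sqrt_rpow_two_mul (by positivity)]
  norm_num

theorem barrier_sqrt_sq_add_one_le (hm : 0 ≤ m) (hx : 0 < x) :
    barrier ω m lam √(x ^ 2 + 1) ≤
      (1 + exp (-(ω ^ 2 / 2)) * gaussWeight ω lam x) ^ 2 * (1 + (x ^ 2)⁻¹) ^ m *
        (1 + x ^ (2 * m)) := by
  set K := (1 + (x ^ 2)⁻¹) ^ m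
  have hK : 1 ≤ K := one_le_rpow (le_add_of_nonneg_right (by positivity)) hm
  have hpow : √(x ^ 2 + 1) ^ (2 * m) = x ^ (2 * m) * K := by
    rw [sqrt_rpow_two_mul (by positivity), rpow_two_mul hx.le, ← mul_rpow (by positivity)
      (by positivity)]
    congr 1
    field_simp
  have hx0 : 0 ≤ x ^ (2 * m) := rpow_nonneg hx.le _
  rw [barrier, gaussWeight_sqrt_sq_add_one, hpow, mul_assoc]
  gcongr
  nlinarith

theorem one_add_gaussWeight_le_of_isMinOn (hm : 0 ≤ m) (hlam : 0 ≤ lam) (hx : 0 < x)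
    (hmin : IsMinOn (barrier ω m lam) (Ici 0) x) :
    1 + gaussWeight ω lam x ≤
      (1 + exp (-(ω ^ 2 / 2)) * gaussWeight ω lam x) * √((1 + (x ^ 2)⁻¹) ^ m) := by
  have hw0 := gaussWeight_nonneg (ω := ω) (x := x) hlam
  have hsq : (1 + gaussWeight ω lam x) ^ 2 * (1 + x ^ (2 * m)) ≤
      ((1 + exp (-(ω ^ 2 / 2)) * gaussWeight ω lam x) * √((1 + (x ^ 2)⁻¹) ^ m)) ^ 2 *
        (1 + x ^ (2 * m)) := by
    rw [mul_pow, sq_sqrt (by positivity)]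
    exact (hmin (sqrt_nonneg _)).trans (barrier_sqrt_sq_add_one_le hm hx)
  have hsq' := le_of_mul_le_mul_right hsq (by positivity)
  exact (pow_le_pow_iff_left₀ (by positivity) (by positivity) two_ne_zero).1 hsq'

end Barrier

section Minimizer

variable {ω m : ℝ} {x₀ : ℝ → ℝ}

theorem tendsto_sq_mul_barrier_of_isMinOn (hω : ω ≠ 0) (hx₀ : ∀ᶠ lam in 𝓝[>] 0, 0 ≤ x₀ lam)
    (hmin : ∀ᶠ lam in 𝓝[>] 0, IsMinOn (barrier ω m lam) (Ici 0) (x₀ lam)) :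
    Tendsto (fun lam => lam ^ 2 * barrier ω m lam (x₀ lam)) (𝓝[>] 0) (𝓝 0) := by
  have hupper : Tendsto (fun lam : ℝ =>
      4 * (lam ^ 2 + (2 / ω ^ 2) ^ m * (lam ^ (2 : ℝ) * (log lam⁻¹) ^ m))) (𝓝[>] 0) (𝓝 0) := by
    have hsq : Tendsto (fun lam : ℝ => lam ^ 2) (𝓝[>] 0) (𝓝 0) :=
      tendsto_nhdsWithin_of_tendsto_nhds (by simpa using (continuous_pow 2).tendsto (0 : ℝ))
    simpa using
      (hsq.add ((tendsto_rpow_mul_log_inv_rpow_nhdsGT_zero two_pos m).const_mul _)).const_mul 4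
  refine tendsto_of_tendsto_of_tendsto_of_le_of_le' tendsto_const_nhds hupper ?_ ?_
  · filter_upwards [self_mem_nhdsWithin, hx₀] with lam hlam hx
    exact (exp_pos _).le.trans (exp_neg_sq_mul_le_sq_mul_barrier hlam hx)
  · filter_upwards [Ioo_mem_nhdsGT one_pos, hmin] with lam ⟨hlam₀, hlam₁⟩ hmin
    have hlog : 0 ≤ log lam⁻¹ := log_nonneg (one_le_inv₀ hlam₀ |>.2 hlam₁.le)
    calc lam ^ 2 * barrier ω m lam (x₀ lam)
        ≤ lam ^ 2 * barrier ω m lam √(2 * log lam⁻¹ / ω ^ 2) := by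
          gcongr
          exact hmin (sqrt_nonneg _)
      _ = 4 * (lam ^ 2 + (2 / ω ^ 2) ^ m * (lam ^ (2 : ℝ) * (log lam⁻¹) ^ m)) := by
          rw [barrier_sqrt_log hω hlam₀ hlam₁.le, mul_div_right_comm,
            mul_rpow (by positivity) hlog, rpow_two]
          ring

theorem tendsto_sq_minimizer_atTop (hω : ω ≠ 0) (hx₀ : ∀ᶠ lam in 𝓝[>] 0, 0 ≤ x₀ lam)
    (hmin : ∀ᶠ lam in 𝓝[>] 0, IsMinOn (barrier ω m lam) (Ici 0) (x₀ lam)) :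
    Tendsto (fun lam => x₀ lam ^ 2) (𝓝[>] 0) atTop := by
  have hexp : Tendsto (fun lam => exp (-(x₀ lam ^ 2 * ω ^ 2))) (𝓝[>] 0) (𝓝 0) := by
    refine tendsto_of_tendsto_of_tendsto_of_le_of_le' tendsto_const_nhds
      (tendsto_sq_mul_barrier_of_isMinOn hω hx₀ hmin) (.of_forall fun _ => (exp_pos _).le) ?_
    filter_upwards [self_mem_nhdsWithin, hx₀] with lam hlam hx
    exact exp_neg_sq_mul_le_sq_mul_barrier hlam hx
  rw [tendsto_exp_comp_nhds_zero, tendsto_neg_atBot_iff] at hexp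
  exact (tendsto_mul_const_atTop_of_pos (by positivity)).1 hexp

theorem tendsto_gaussWeight_minimizer (hω : ω ≠ 0) (hm : 0 ≤ m)
    (hx₀ : ∀ᶠ lam in 𝓝[>] 0, 0 ≤ x₀ lam)
    (hmin : ∀ᶠ lam in 𝓝[>] 0, IsMinOn (barrier ω m lam) (Ici 0) (x₀ lam)) :
    Tendsto (fun lam => gaussWeight ω lam (x₀ lam)) (𝓝[>] 0) (𝓝 0) := by
  have hsq := tendsto_sq_minimizer_atTop hω hx₀ hmin
  have hK : Tendsto (fun lam => √((1 + (x₀ lam ^ 2)⁻¹) ^ m)) (𝓝[>] 0) (𝓝 1) := by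
    have h : Tendsto (fun lam => 1 + (x₀ lam ^ 2)⁻¹) (𝓝[>] 0) (𝓝 1) := by
      simpa using hsq.inv_tendsto_atTop.const_add 1
    simpa [Function.comp_def] using (continuous_sqrt.tendsto _).comp
      ((continuousAt_rpow_const 1 m (Or.inl one_ne_zero)).tendsto.comp h)
  refine tendsto_zero_of_one_add_le_mul (q := exp (-(ω ^ 2 / 2)))
    (exp_lt_one_iff.2 (neg_lt_zero.2 (by positivity))) hK ?_ ?_
  · filter_upwards [self_mem_nhdsWithin] with lam (hlam : 0 < lam)
    exact gaussWeight_nonneg hlam.le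
  · filter_upwards [self_mem_nhdsWithin, hx₀, hmin, hsq.eventually_gt_atTop 0]
      with lam (hlam : 0 < lam) hx hmin hpos
    exact one_add_gaussWeight_le_of_isMinOn hm hlam.le (hx.lt_of_ne fun h => by simp [← h] at hpos)
      hmin

end Minimizer

/-- If `x₀(λ)` is a global minimizer over `[0,∞)` of
`B_λ(x) = (1 + λ⁻¹ e^{−x²ω²/2})² (1 + x^{2m})` for each `λ ∈ (0,1)`, then
`B_λ(x₀(λ)) ∼ x₀(λ)^{2m}` as `λ → 0⁺`. -/
theorem stmt_12 (ω m : ℝ) (hω : 0 < ω) (hm : 1 ≤ m)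
    (B : ℝ → ℝ → ℝ)
    (hB : ∀ lam x, B lam x =
      (1 + lam⁻¹ * Real.exp (-x ^ 2 * ω ^ 2 / 2)) ^ 2 * (1 + x ^ (2 * m)))
    (x₀ : ℝ → ℝ)
    (hx₀ : ∀ lam ∈ Set.Ioo (0 : ℝ) 1, x₀ lam ∈ Set.Ici (0 : ℝ) ∧
      ∀ x ∈ Set.Ici (0 : ℝ), B lam (x₀ lam) ≤ B lam x) :
    Tendsto (fun lam : ℝ => B lam (x₀ lam) / (x₀ lam) ^ (2 * m))
      (nhdsWithin 0 (Set.Ioi 0)) (nhds 1) := by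
  obtain rfl : B = barrier ω m := funext₂ hB
  have hIoo : ∀ᶠ lam in 𝓝[>] (0 : ℝ), lam ∈ Ioo 0 1 := Ioo_mem_nhdsGT one_pos
  have hx₀' : ∀ᶠ lam in 𝓝[>] (0 : ℝ), 0 ≤ x₀ lam := hIoo.mono fun lam h => (hx₀ lam h).1
  have hmin : ∀ᶠ lam in 𝓝[>] (0 : ℝ), IsMinOn (barrier ω m lam) (Ici 0) (x₀ lam) :=
    hIoo.mono fun lam h => (hx₀ lam h).2
  have hm₀ : 0 < m := one_pos.trans_le hm
  have hpow : Tendsto (fun lam => x₀ lam ^ (2 * m)) (𝓝[>] 0) atTop := by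
    refine ((tendsto_rpow_atTop hm₀).comp (tendsto_sq_minimizer_atTop hω.ne' hx₀' hmin)).congr' ?_
    filter_upwards [hx₀'] with lam hx using (rpow_two_mul hx m).symm
  have hlim := (((tendsto_gaussWeight_minimizer hω.ne' hm₀.le hx₀' hmin).const_add 1).pow 2).mul
    (hpow.inv_tendsto_atTop.const_add 1)
  rw [add_zero, one_pow, mul_one] at hlim
  refine hlim.congr' ?_
  filter_upwards [hpow.eventually_gt_atTop 0] with lam hpos
  rw [barrier, Pi.inv_apply, mul_div_assoc, add_div, div_self hpos.ne', one_div]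
  ring
end

section
/- Let ω > 0. Then, as μ → ∞, ∑_{l=1}^{∞} max(0, 1 − e^{l²ω²/4}/μ) ∼ 2 ω^{−1} (log μ)^{1/2}; that is, lim_{μ→∞} (∑'_{l ≥ 1} max(0, 1 − e^{l²ω²/4}/μ)) / (2 ω^{−1} (log μ)^{1/2}) = 1. -/
/-!
Put `T = (log μ / a) ^ (1 / p)`, so that `exp (a l ^ p) / μ = μ ^ ((l / T) ^ p - 1)`. The terms of
`∑_{l ≥ 1} (1 - exp (a l ^ p) / μ)₊` are at most `1` and vanish for `l ≥ T`, while for `l ≤ δ T`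
they are at least `1 - μ ^ (δ ^ p - 1)`. Hence `⌊δ T⌋ (1 - μ ^ (δ ^ p - 1)) ≤ ∑ ≤ ⌈T⌉` for every
`δ ∈ [0, 1)`; dividing by `T → ∞` and letting `δ → 1` shows that the sum is asymptotic to `T`,
which for `a = ω² / 4`, `p = 2` is `2 ω⁻¹ √(log μ)`.
-/

open Real Filter Topology

noncomputable def pinskerTerm (a p μ x : ℝ) : ℝ :=
  max 0 (1 - exp (a * x ^ p) / μ)

noncomputable def pinskerSum (a p μ : ℝ) : ℝ :=
  ∑' k : ℕ, pinskerTerm a p μ (k + 1)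

noncomputable def pinskerScale (a p μ : ℝ) : ℝ :=
  (log μ / a) ^ p⁻¹

section Pinsker

variable {a p μ : ℝ}

lemma pinskerTerm_nonneg (a p μ x : ℝ) : 0 ≤ pinskerTerm a p μ x :=
  le_max_left _ _

lemma pinskerTerm_le_one (hμ : 0 < μ) (a p x : ℝ) : pinskerTerm a p μ x ≤ 1 :=
  max_le zero_le_one (by linarith [div_pos (exp_pos (a * x ^ p)) hμ])

lemma pinskerScale_nonneg (ha : 0 < a) (hμ : 1 ≤ μ) (p : ℝ) : 0 ≤ pinskerScale a p μ :=
  rpow_nonneg (div_nonneg (log_nonneg hμ) ha.le) _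

lemma mul_pinskerScale_rpow (ha : 0 < a) (hp : 0 < p) (hμ : 1 ≤ μ) :
    a * pinskerScale a p μ ^ p = log μ := by
  rw [pinskerScale, rpow_inv_rpow (div_nonneg (log_nonneg hμ) ha.le) hp.ne']
  field_simp

lemma tendsto_pinskerScale_atTop (ha : 0 < a) (hp : 0 < p) :
    Tendsto (pinskerScale a p) atTop atTop :=
  (tendsto_rpow_atTop (inv_pos.2 hp)).comp (tendsto_log_atTop.atTop_div_const ha)

lemma pinskerTerm_eq_zero (ha : 0 < a) (hp : 0 < p) (hμ : 1 ≤ μ) {x : ℝ}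
    (hx : pinskerScale a p μ ≤ x) : pinskerTerm a p μ x = 0 := by
  have := pinskerScale_nonneg ha hμ p
  have hlog : log μ ≤ a * x ^ p := by
    rw [← mul_pinskerScale_rpow ha hp hμ]
    gcongr
  have hμx : μ ≤ exp (a * x ^ p) := by
    rw [← exp_log (by linarith : 0 < μ)]
    exact exp_le_exp.2 hlog
  have : 1 ≤ exp (a * x ^ p) / μ := (one_le_div (by linarith)).2 hμx
  exact max_eq_left (by linarith)

lemma one_sub_rpow_le_pinskerTerm (ha : 0 < a) (hp : 0 < p) (hμ : 1 ≤ μ) {x δ : ℝ}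
    (hx : 0 ≤ x) (hδ : 0 ≤ δ) (hxδ : x ≤ δ * pinskerScale a p μ) :
    1 - μ ^ (δ ^ p - 1) ≤ pinskerTerm a p μ x := by
  have hμ0 : 0 < μ := by linarith
  have hT := pinskerScale_nonneg ha hμ p
  have hexp : a * x ^ p ≤ log μ * δ ^ p :=
    calc a * x ^ p ≤ a * (δ * pinskerScale a p μ) ^ p := by gcongr
      _ = log μ * δ ^ p := by
        rw [mul_rpow hδ hT, mul_left_comm, mul_pinskerScale_rpow ha hp hμ, mul_comm]
  have : exp (a * x ^ p) / μ ≤ μ ^ (δ ^ p - 1) := by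
    rw [rpow_sub_one hμ0.ne', rpow_def_of_pos hμ0]
    gcongr
  exact le_max_of_le_right (by linarith)

lemma pinskerTerm_eq_zero_of_ceil_le (ha : 0 < a) (hp : 0 < p) (hμ : 1 ≤ μ) {k : ℕ}
    (hk : ⌈pinskerScale a p μ⌉₊ ≤ k) : pinskerTerm a p μ (k + 1) = 0 :=
  pinskerTerm_eq_zero ha hp hμ <| (Nat.le_ceil _).trans (by exact_mod_cast hk.trans k.le_succ)

lemma summable_pinskerTerm (ha : 0 < a) (hp : 0 < p) (hμ : 1 ≤ μ) :
    Summable fun k : ℕ => pinskerTerm a p μ (k + 1) :=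
  summable_of_ne_finset_zero (s := Finset.range ⌈pinskerScale a p μ⌉₊) fun _ hk =>
    pinskerTerm_eq_zero_of_ceil_le ha hp hμ (by simpa using hk)

lemma pinskerSum_eq_sum (ha : 0 < a) (hp : 0 < p) (hμ : 1 ≤ μ) :
    pinskerSum a p μ = ∑ k ∈ Finset.range ⌈pinskerScale a p μ⌉₊, pinskerTerm a p μ (k + 1) :=
  tsum_eq_sum fun _ hk => pinskerTerm_eq_zero_of_ceil_le ha hp hμ (by simpa using hk)

lemma pinskerSum_le_ceil (ha : 0 < a) (hp : 0 < p) (hμ : 1 ≤ μ) :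
    pinskerSum a p μ ≤ ⌈pinskerScale a p μ⌉₊ := by
  rw [pinskerSum_eq_sum ha hp hμ]
  simpa using Finset.sum_le_card_nsmul (Finset.range ⌈pinskerScale a p μ⌉₊) _ 1
    fun k _ => pinskerTerm_le_one (by linarith) a p _

lemma floor_mul_le_pinskerSum (ha : 0 < a) (hp : 0 < p) (hμ : 1 ≤ μ) {δ : ℝ} (hδ : 0 ≤ δ) :
    ⌊δ * pinskerScale a p μ⌋₊ * (1 - μ ^ (δ ^ p - 1)) ≤ pinskerSum a p μ := by
  have := pinskerScale_nonneg ha hμ p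
  calc (⌊δ * pinskerScale a p μ⌋₊ : ℝ) * (1 - μ ^ (δ ^ p - 1))
      = ∑ _k ∈ Finset.range ⌊δ * pinskerScale a p μ⌋₊, (1 - μ ^ (δ ^ p - 1)) := by
        rw [Finset.sum_const, Finset.card_range, nsmul_eq_mul]
    _ ≤ ∑ k ∈ Finset.range ⌊δ * pinskerScale a p μ⌋₊, pinskerTerm a p μ (k + 1) := by
        refine Finset.sum_le_sum fun k hk =>
          one_sub_rpow_le_pinskerTerm ha hp hμ (by positivity) hδ ?_
        have : k + 1 ≤ ⌊δ * pinskerScale a p μ⌋₊ := Finset.mem_range.1 hk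
        exact_mod_cast (Nat.le_floor_iff (by positivity)).1 this
    _ ≤ pinskerSum a p μ :=
        (summable_pinskerTerm ha hp hμ).sum_le_tsum _ fun k _ => pinskerTerm_nonneg a p μ _

theorem tendsto_pinskerSum_div_pinskerScale (ha : 0 < a) (hp : 0 < p) :
    Tendsto (fun μ => pinskerSum a p μ / pinskerScale a p μ) atTop (𝓝 1) := by
  have hT := tendsto_pinskerScale_atTop ha hp
  refine tendsto_order.2 ⟨fun b hb => ?_, fun b hb => ?_⟩
  · obtain ⟨δ, hbδ, hδ1⟩ := exists_between (max_lt hb zero_lt_one)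
    have hδ : 0 ≤ δ := (le_max_right b 0).trans hbδ.le
    have hμpow : Tendsto (fun μ : ℝ => μ ^ (δ ^ p - 1)) atTop (𝓝 0) := by
      simpa using tendsto_rpow_neg_atTop (y := 1 - δ ^ p) (by linarith [rpow_lt_one hδ hδ1 hp])
    have hlim : Tendsto (fun μ => ⌊δ * pinskerScale a p μ⌋₊ / pinskerScale a p μ *
        (1 - μ ^ (δ ^ p - 1))) atTop (𝓝 (δ * (1 - 0))) :=
      ((tendsto_nat_floor_mul_div_atTop hδ).comp hT).mul (tendsto_const_nhds.sub hμpow)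
    filter_upwards [hlim.eventually (lt_mem_nhds (by simpa using (le_max_left b 0).trans_lt hbδ)),
      eventually_ge_atTop 1, hT.eventually_gt_atTop 0] with μ hμ hμ1 hT0
    calc b < _ := hμ
      _ = ⌊δ * pinskerScale a p μ⌋₊ * (1 - μ ^ (δ ^ p - 1)) / pinskerScale a p μ :=
        div_mul_eq_mul_div ..
      _ ≤ _ := div_le_div_of_nonneg_right (floor_mul_le_pinskerSum ha hp hμ1 hδ) hT0.le
  · filter_upwards [(tendsto_nat_ceil_div_atTop.comp hT).eventually (gt_mem_nhds hb),
      eventually_ge_atTop 1, hT.eventually_gt_atTop 0] with μ hμ hμ1 hT0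
    exact (div_le_div_of_nonneg_right (pinskerSum_le_ceil ha hp hμ1) hT0.le).trans_lt hμ

end Pinsker

lemma pinskerScale_sq_div_four {ω : ℝ} (hω : 0 ≤ ω) (μ : ℝ) :
    pinskerScale (ω ^ 2 / 4) 2 μ = 2 * ω⁻¹ * √(log μ) := by
  rw [pinskerScale, ← one_div, ← sqrt_eq_rpow, sqrt_div' _ (by positivity),
    sqrt_div' _ (by positivity), sqrt_sq hω]
  norm_num
  field_simp

/-- As `μ → ∞`, `∑_{l=1}^∞ max (0, 1 − e^{l²ω²/4}/μ) ∼ 2 ω⁻¹ (log μ)^{1/2}`. -/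
theorem stmt_14 (ω : ℝ) (hω : 0 < ω) :
    Tendsto (fun μ : ℝ =>
        (∑' l : ℕ, max 0 (1 - Real.exp (((l : ℝ) + 1) ^ 2 * ω ^ 2 / 4) / μ)) /
          (2 * ω⁻¹ * Real.sqrt (Real.log μ)))
      atTop (nhds 1) := by
  refine (tendsto_pinskerSum_div_pinskerScale (a := ω ^ 2 / 4) (by positivity) two_pos).congr
    fun μ => ?_
  rw [pinskerScale_sq_div_four hω.le]
  congr 1
  refine tsum_congr fun l => ?_
  rw [pinskerTerm, rpow_two, mul_div_assoc, mul_comm]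
end

section
/- Let 0 < ω ≤ 1 and let G(r) = (2π)^{−1/2} ω^{−1} exp(−r²/(2ω²)). Define G^∞(s) = ∑_{k ∈ ℤ} G(s − 2kπ) and G^1(s) = ∑_{k=−1}^{1} G(s − 2kπ). Then for every s ∈ [−π, π], 0 < G^∞(s) − G^1(s) < 2.1 × 10^{−20}. -/
/-!
For `|s| ≤ π` the discarded translates `s - 2kπ`, `|k| ≥ 2`, lie at distance at least
`(2|k| - 1)π` from the origin, and if `s ≥ 0` those with `k ≤ -2` even at distance `2|k|π`.
Since `ω ≤ 1`, a term at distance `x ≥ √2` is at most `(2π)^{-1/2} exp (-x² / 2)`, so with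
`r = exp (-π² / 2)` the pair `k = ±(n + 2)` contributes at most `(2π)^{-1/2} (r⁹ + r¹⁶) r^{12n}`.
Summing the geometric series bounds the difference by `(2π)^{-1/2} r⁹ (1 + r⁷) / (1 - r¹²)`,
which is about `2.054 × 10⁻²⁰`.
-/

open Real Finset

noncomputable def gaussian (ω x : ℝ) : ℝ :=
  (Real.sqrt (2 * π))⁻¹ * ω⁻¹ * Real.exp (-x ^ 2 / (2 * ω ^ 2))

lemma HasSum.int_of_nat_add_two {G : Type*} [AddCommGroup G] [TopologicalSpace G]
    [IsTopologicalAddGroup G] {f : ℤ → G} {a b : G}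
    (ha : HasSum (fun n : ℕ ↦ f (n + 2)) a) (hb : HasSum (fun n : ℕ ↦ f (-(n + 2))) b) :
    HasSum f (∑ k ∈ Icc (-1 : ℤ) 1, f k + (a + b)) := by
  have hnat : HasSum (fun n : ℕ ↦ f n) (a + ∑ i ∈ range 2, f i) :=
    (hasSum_nat_add_iff (f := fun n : ℕ ↦ f n) 2).1 (by exact_mod_cast ha)
  have hneg : HasSum (fun n : ℕ ↦ f (-(n + 1))) (b + ∑ i ∈ range 1, f (-(i + 1))) :=
    (hasSum_nat_add_iff (f := fun n : ℕ ↦ f (-(n + 1))) 1).1 (by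
      convert hb using 3; push_cast; ring)
  convert hnat.of_nat_of_neg_add_one hneg using 1
  have : Icc (-1 : ℤ) 1 = {-1, 0, 1} := by decide
  rw [this, sum_insert (by decide), sum_pair (by decide)]
  simp only [sum_range_succ, range_one, sum_singleton, Nat.cast_zero, Nat.cast_one,
    _root_.zero_add]
  abel

lemma hasSum_int_of_summable_pairs {f : ℤ → ℝ} (hf : ∀ k, 0 ≤ f k)
    (hs : Summable fun n : ℕ ↦ f (n + 2) + f (-(n + 2))) :
    HasSum f (∑ k ∈ Icc (-1 : ℤ) 1, f k + ∑' n : ℕ, (f (n + 2) + f (-(n + 2)))) := by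
  have hpos : Summable fun n : ℕ ↦ f (n + 2) :=
    hs.of_nonneg_of_le (fun _ ↦ hf _) fun _ ↦ le_add_of_nonneg_right (hf _)
  have hneg : Summable fun n : ℕ ↦ f (-(n + 2)) :=
    hs.of_nonneg_of_le (fun _ ↦ hf _) fun _ ↦ le_add_of_nonneg_left (hf _)
  rw [hpos.tsum_add hneg]
  exact hpos.hasSum.int_of_nat_add_two hneg.hasSum

/-- Write `ω⁻¹ = exp (log ω⁻¹)` and use `log u ≤ u - 1 ≤ (y / 2) (u ^ 2 - 1)` for `u ≥ 1`. -/
lemma inv_mul_exp_neg_div_le {ω y : ℝ} (hω0 : 0 < ω) (hω1 : ω ≤ 1) (hy : 2 ≤ y) :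
    ω⁻¹ * exp (-y / (2 * ω ^ 2)) ≤ exp (-y / 2) := by
  have hu : 1 ≤ ω⁻¹ := (one_le_inv₀ hω0).2 hω1
  have hlog : log ω⁻¹ ≤ ω⁻¹ - 1 := log_le_sub_one_of_pos (by positivity)
  have hy' : -y / (2 * ω ^ 2) = -(y / 2) * ω⁻¹ ^ 2 := by field_simp
  rw [← exp_log (inv_pos.2 hω0), ← exp_add, exp_le_exp, hy']
  nlinarith [mul_nonneg (sub_nonneg.2 hy) (sub_nonneg.2 (one_le_pow₀ hu (n := 2)))]

lemma gaussian_le_of_mul_pi_sq_le {ω x : ℝ} (hω0 : 0 < ω) (hω1 : ω ≤ 1) {m : ℕ} (hm : 1 ≤ m)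
    (hx : m * π ^ 2 ≤ x ^ 2) :
    gaussian ω x ≤ (√(2 * π))⁻¹ * exp (-(π ^ 2 / 2)) ^ m := by
  have hπ : 2 ≤ (m : ℝ) * π ^ 2 := by
    have : (1 : ℝ) ≤ m := by exact_mod_cast hm
    nlinarith [pi_gt_three]
  rw [gaussian, mul_assoc, ← exp_nat_mul]
  gcongr
  calc ω⁻¹ * exp (-x ^ 2 / (2 * ω ^ 2)) ≤ exp (-x ^ 2 / 2) :=
        inv_mul_exp_neg_div_le hω0 hω1 (hπ.trans hx)
    _ ≤ exp (m * -(π ^ 2 / 2)) := by gcongr; linarith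

lemma gaussian_neg (ω x : ℝ) : gaussian ω (-x) = gaussian ω x := by
  simp only [gaussian, neg_sq]

lemma gaussian_pos {ω : ℝ} (hω0 : 0 < ω) (x : ℝ) : 0 < gaussian ω x := by
  unfold gaussian; positivity

lemma gaussian_add_gaussian_le {ω s : ℝ} (hω0 : 0 < ω) (hω1 : ω ≤ 1) (hs : |s| ≤ π) (n : ℕ) :
    gaussian ω (s - 2 * (n + 2) * π) + gaussian ω (s + 2 * (n + 2) * π) ≤
      (√(2 * π))⁻¹ * (exp (-(π ^ 2 / 2)) ^ 9 + exp (-(π ^ 2 / 2)) ^ 16) *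
        (exp (-(π ^ 2 / 2)) ^ 12) ^ n := by
  wlog hs0 : 0 ≤ s generalizing s
  · have h := this (s := -s) (by rwa [abs_neg]) (by linarith)
    rwa [show -s - 2 * (n + 2) * π = -(s + 2 * (n + 2) * π) by ring,
      show -s + 2 * (n + 2) * π = -(s - 2 * (n + 2) * π) by ring,
      gaussian_neg, gaussian_neg, add_comm] at h
  have hs1 : s ≤ π := (le_abs_self s).trans hs
  have hnear : ((9 + 12 * n : ℕ) : ℝ) * π ^ 2 ≤ (s - 2 * (n + 2) * π) ^ 2 := by
    have h : (2 * n + 3) * π ≤ 2 * (n + 2) * π - s := by linarith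
    have h0 : 0 ≤ (2 * n + 3) * π := by positivity
    push_cast; nlinarith [mul_le_mul h h h0 (h0.trans h), sq_nonneg ((n : ℝ) * π)]
  have hfar : ((16 + 12 * n : ℕ) : ℝ) * π ^ 2 ≤ (s + 2 * (n + 2) * π) ^ 2 := by
    have h : (2 * n + 4) * π ≤ s + 2 * (n + 2) * π := by linarith
    have h0 : 0 ≤ (2 * n + 4) * π := by positivity
    push_cast; nlinarith [mul_le_mul h h h0 (h0.trans h), sq_nonneg ((n : ℝ) * π)]
  calc _ ≤ (√(2 * π))⁻¹ * exp (-(π ^ 2 / 2)) ^ (9 + 12 * n) +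
        (√(2 * π))⁻¹ * exp (-(π ^ 2 / 2)) ^ (16 + 12 * n) :=
        add_le_add (gaussian_le_of_mul_pi_sq_le hω0 hω1 (by omega) hnear)
          (gaussian_le_of_mul_pi_sq_le hω0 hω1 (by omega) hfar)
    _ = _ := by simp only [pow_add, pow_mul]; ring

lemma le_sqrt_two_mul_pi : (2.5066 : ℝ) ≤ √(2 * π) :=
  Real.le_sqrt_of_sq_le (by nlinarith [pi_gt_d6])

lemma exp_neg_pi_sq_div_two_le : exp (-(π ^ 2 / 2)) ≤ 0.1 := by
  have h := quadratic_le_exp_of_nonneg (x := 4.5) (by norm_num)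
  rw [exp_neg, inv_le_comm₀ (exp_pos _) (by norm_num)]
  calc (0.1 : ℝ)⁻¹ ≤ 1 + 4.5 + 4.5 ^ 2 / 2 := by norm_num
    _ ≤ exp 4.5 := h
    _ ≤ exp (π ^ 2 / 2) := by gcongr; nlinarith [pi_gt_three]

lemma exp_neg_nine_mul_pi_sq_div_two_le : exp (-(9 * π ^ 2 / 2)) ≤ (1.91e19)⁻¹ := by
  have he : (2.7182818283 : ℝ) ^ 44 ≤ exp 44 := by
    rw [show (44 : ℝ) = (44 : ℕ) * 1 by norm_num, exp_nat_mul]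
    gcongr
    exact exp_one_gt_d9.le
  have hq := quadratic_le_exp_of_nonneg (x := 0.4132) (by norm_num)
  rw [exp_neg]
  refine inv_anti₀ (by norm_num) ?_
  calc (1.91e19 : ℝ) ≤ 2.7182818283 ^ 44 * (1 + 0.4132 + 0.4132 ^ 2 / 2) := by norm_num
    _ ≤ exp 44 * exp 0.4132 := by gcongr
    _ = exp 44.4132 := by rw [← exp_add]; norm_num
    _ ≤ exp (9 * π ^ 2 / 2) := by gcongr; nlinarith [pi_gt_d6]

lemma gaussian_tail_constant_lt :
    (√(2 * π))⁻¹ * (exp (-(π ^ 2 / 2)) ^ 9 + exp (-(π ^ 2 / 2)) ^ 16) *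
      (1 - exp (-(π ^ 2 / 2)) ^ 12)⁻¹ < 2.1e-20 := by
  have hr9 : exp (-(π ^ 2 / 2)) ^ 9 ≤ (1.91e19)⁻¹ := by
    rw [← exp_nat_mul, show ((9 : ℕ) : ℝ) * -(π ^ 2 / 2) = -(9 * π ^ 2 / 2) by push_cast; ring]
    exact exp_neg_nine_mul_pi_sq_div_two_le
  have hr := exp_neg_pi_sq_div_two_le
  have hc : (√(2 * π))⁻¹ ≤ (2.5066)⁻¹ := inv_anti₀ (by norm_num) le_sqrt_two_mul_pi
  set r := exp (-(π ^ 2 / 2))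
  have hr0 : 0 ≤ r := (exp_pos _).le
  have hr7 : r ^ 7 ≤ 0.1 ^ 7 := by gcongr
  have hr12 : r ^ 12 ≤ 0.1 ^ 12 := by gcongr
  calc (√(2 * π))⁻¹ * (r ^ 9 + r ^ 16) * (1 - r ^ 12)⁻¹
        = (√(2 * π))⁻¹ * r ^ 9 * (1 + r ^ 7) * (1 - r ^ 12)⁻¹ := by ring
    _ ≤ (2.5066)⁻¹ * (1.91e19)⁻¹ * (1 + 0.1 ^ 7) * (1 - 0.1 ^ 12)⁻¹ := by
        have : 0 < 1 - r ^ 12 := by linarith [show (0.1 : ℝ) ^ 12 < 1 by norm_num]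
        gcongr
    _ < 2.1e-20 := by norm_num

/-- For `0 < ω ≤ 1`, the periodized Gaussian `G^∞(s) = ∑_{k∈ℤ} G(s − 2kπ)` differs from its
three-term truncation `G^1(s) = ∑_{k=−1}^{1} G(s − 2kπ)` by at most `2.1 × 10^{−20}` on
`[−π, π]`, and the difference is strictly positive. -/
theorem stmt_18 (ω : ℝ) (hω0 : 0 < ω) (hω1 : ω ≤ 1) (G : ℝ → ℝ)
    (hG : ∀ r : ℝ, G r = (Real.sqrt (2 * π))⁻¹ * ω⁻¹ * Real.exp (-r ^ 2 / (2 * ω ^ 2))) :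
    ∀ s ∈ Set.Icc (-π) π,
      0 < (∑' k : ℤ, G (s - 2 * k * π)) - ∑ k ∈ Finset.Icc (-1 : ℤ) 1, G (s - 2 * k * π) ∧
      (∑' k : ℤ, G (s - 2 * k * π)) - ∑ k ∈ Finset.Icc (-1 : ℤ) 1, G (s - 2 * k * π)
        < 2.1e-20 := by
  obtain rfl : G = gaussian ω := funext hG
  intro s hs
  set r := exp (-(π ^ 2 / 2))
  have hq : r ^ 12 < 1 :=
    pow_lt_one₀ (exp_pos _).le (exp_neg_pi_sq_div_two_le.trans_lt (by norm_num)) (by norm_num)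
  have hgeom := (hasSum_geometric_of_lt_one (by positivity) hq).mul_left
    ((√(2 * π))⁻¹ * (r ^ 9 + r ^ 16))
  have hpos (x : ℝ) : 0 < gaussian ω x := gaussian_pos hω0 x
  have hpair (n : ℕ) : gaussian ω (s - 2 * ((n + 2 : ℤ) : ℝ) * π) +
      gaussian ω (s - 2 * ((-(n + 2) : ℤ) : ℝ) * π) ≤
      (√(2 * π))⁻¹ * (r ^ 9 + r ^ 16) * (r ^ 12) ^ n := by
    convert gaussian_add_gaussian_le hω0 hω1 (abs_le.2 hs) n using 4 <;> push_cast <;> ring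
  have hsum := hgeom.summable.of_nonneg_of_le (fun n ↦ (add_pos (hpos _) (hpos _)).le) hpair
  rw [(hasSum_int_of_summable_pairs (f := fun k : ℤ ↦ gaussian ω (s - 2 * k * π))
    (fun k ↦ (hpos _).le) hsum).tsum_eq, add_sub_cancel_left]
  constructor
  · exact hsum.tsum_pos (fun n ↦ (add_pos (hpos _) (hpos _)).le) 0 (add_pos (hpos _) (hpos _))
  · calc _ ≤ _ := hsum.tsum_le_tsum hpair hgeom.summable
      _ = _ := hgeom.tsum_eq
      _ < 2.1e-20 := gaussian_tail_constant_lt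
end
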